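/- arXiv:1409.5699 — 2 statements merged into one kernel-verified Lean document; each statement's English description precedes it below -/
import Mathlib

section
/- TNNIL-conservativity of LC over LLe+: for every modal proposition A ∈ TNNIL, if LC ⊢ A then LLe+ ⊢ A. -/
namespace PLHA

/-! ## Modal propositional language -/

/-- Modal propositional formulas: atomic variables, ⊥, ∧, ∨, →, □. -/
inductive Form : Type
  | var : ℕ → Form
  | bot : Form
  | and : Form → Form → Form
  | or  : Form → Form → Form
  | imp : Form → Form → Form
  | box : Form → Form
  deriving DecidableEq

namespace Form

/-- ⊤ -/
def top : Form := imp bot bot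

/-- A ↔ B -/
def iffF (A B : Form) : Form := and (imp A B) (imp B A)

/-- ⊡A := A ∧ □A -/
def boxdot (A : Form) : Form := and A (box A)

/-- `A ∈ NOI`: every occurrence of → is in the scope of some □. -/
def noi : Form → Bool
  | var _ => true
  | bot => true
  | and A B => noi A && noi B
  | or A B => noi A && noi B
  | imp _ _ => false
  | box _ => true

/-- The Leivant translation `A^l`. -/
def lev : Form → Form
  | var n => var n
  | bot => bot
  | and A B => and (lev A) (lev B)
  | or A B => or (boxdot (lev A)) (boxdot (lev B))
  | imp A B => if noi A then imp A (lev B) else imp A B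
  | box A => box A

/-- atomic propositions: atomic variables and ⊥. -/
def isAtom (A : Form) : Prop := (∃ n, A = var n) ∨ A = bot

/-- boxed propositions. -/
def isBoxed (A : Form) : Prop := ∃ B, A = box B

/-- non-modal (□-free) propositions. -/
def boxFree : Form → Bool
  | var _ => true
  | bot => true
  | and A B => boxFree A && boxFree B
  | or A B => boxFree A && boxFree B
  | imp A B => boxFree A && boxFree B
  | box _ => false

/-- A bound on the indices of the variables occurring in a formula. -/
def fvb : Form → ℕ
  | var n => n + 1
  | bot => 0
  | and A B => max (fvb A) (fvb B)
  | or A B => max (fvb A) (fvb B)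
  | imp A B => max (fvb A) (fvb B)
  | box A => fvb A

/-- maximal nesting depth of boxes. -/
def bdep : Form → ℕ
  | var _ => 0
  | bot => 0
  | and A B => max (bdep A) (bdep B)
  | or A B => max (bdep A) (bdep B)
  | imp A B => max (bdep A) (bdep B)
  | box A => bdep A + 1

/-- the complexity measure ρ used to define NNIL. -/
def rho : Form → ℕ
  | var _ => 0
  | bot => 0
  | and A B => max (rho A) (rho B)
  | or A B => max (rho A) (rho B)
  | imp A B => max (rho A + 1) (rho B)
  | box _ => 0

end Form

/-- NNIL: no nested implications to the left. -/
def NNILc (A : Form) : Prop := Form.rho A ≤ 1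

/-- TNNIL: thoroughly NNIL propositions. -/
inductive TNNIL : Form → Prop
  | var (n : ℕ) : TNNIL (.var n)
  | bot : TNNIL .bot
  | and {A B} : TNNIL A → TNNIL B → TNNIL (.and A B)
  | or {A B} : TNNIL A → TNNIL B → TNNIL (.or A B)
  | box {A} : TNNIL A → TNNIL (.box A)
  | imp {A B} : A.noi = true → TNNIL A → TNNIL B → TNNIL (.imp A B)

/-- TNNIL⁻: propositions of the form B(□C₁,…,□Cₙ) with B non-modal and Cᵢ ∈ TNNIL. -/
inductive TNNILminus : Form → Prop
  | var (n : ℕ) : TNNILminus (.var n)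
  | bot : TNNILminus .bot
  | box {A} : TNNIL A → TNNILminus (.box A)
  | and {A B} : TNNILminus A → TNNILminus B → TNNILminus (.and A B)
  | or {A B} : TNNILminus A → TNNILminus B → TNNILminus (.or A B)
  | imp {A B} : TNNILminus A → TNNILminus B → TNNILminus (.imp A B)

/-! ## Proof systems -/

/-- Hilbert-style axioms of intuitionistic propositional logic (over the modal language). -/
inductive IpcAx : Form → Prop
  | a1 (A B) : IpcAx (.imp A (.imp B A))
  | a2 (A B C) : IpcAx (.imp (.imp A (.imp B C)) (.imp (.imp A B) (.imp A C)))
  | a3 (A B) : IpcAx (.imp A (.imp B (.and A B)))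
  | a4 (A B) : IpcAx (.imp (.and A B) A)
  | a5 (A B) : IpcAx (.imp (.and A B) B)
  | a6 (A B) : IpcAx (.imp A (.or A B))
  | a7 (A B) : IpcAx (.imp B (.or A B))
  | a8 (A B C) : IpcAx (.imp (.imp A C) (.imp (.imp B C) (.imp (.or A B) C)))
  | a9 (A) : IpcAx (.imp .bot A)

/-- Derivability from IPC axioms together with extra axioms `Ax`, modus ponens,
and (if `useNec = true`) the necessitation rule. -/
inductive Proves (Ax : Form → Prop) (useNec : Bool) : Form → Prop
  | ax {A} : Ax A → Proves Ax useNec A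
  | ipc {A} : IpcAx A → Proves Ax useNec A
  | mp {A B} : Proves Ax useNec (.imp A B) → Proves Ax useNec A → Proves Ax useNec B
  | nec {A} : useNec = true → Proves Ax useNec A → Proves Ax useNec (.box A)

/-- K and 4 axiom schemas. -/
inductive K4Ax : Form → Prop
  | k (A B) : K4Ax (.imp (.box (.imp A B)) (.imp (.box A) (.box B)))
  | four (A) : K4Ax (.imp (.box A) (.box (.box A)))

/-- K, 4, and Löb's axiom schemas. -/
inductive GLAx : Form → Prop
  | k (A B) : GLAx (.imp (.box (.imp A B)) (.imp (.box A) (.box B)))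
  | four (A) : GLAx (.imp (.box A) (.box (.box A)))
  | lob (A) : GLAx (.imp (.box (.imp (.box A) A)) (.box A))

/-- IPC_□ : intuitionistic propositional logic over the modal language. -/
def IPCbProves : Form → Prop := Proves (fun _ => False) false

/-- iK4. -/
def iK4Proves : Form → Prop := Proves K4Ax true

/-- iGL. -/
def iGLProves : Form → Prop := Proves GLAx true

/-- the completeness principle CP : A → □A. -/
def CPAx : Form → Prop := fun F => ∃ A : Form, F = .imp A (.box A)

/-- LC := iGL + CP. -/
def LCProves : Form → Prop := Proves (fun F => GLAx F ∨ CPAx F) true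

/-- CP restricted to atomic propositions. -/
def CPaAx : Form → Prop := fun F => ∃ A : Form, A.isAtom ∧ F = .imp A (.box A)

/-- the extended Leivant principle Le⁺ : □A → □A^l. -/
def LeplusAx : Form → Prop := fun F => ∃ A : Form, F = .imp (.box A) (.box A.lev)

/-- LLe⁺ := iGL + Le⁺ + CP_a. -/
def LLeplusProves : Form → Prop := Proves (fun F => GLAx F ∨ LeplusAx F ∨ CPaAx F) true

/-! ## The preservativity relation ▶ -/

/-- the bracket operation [A]B. -/
def bracket (A : Form) : Form → Form
  | .and B C => .and (bracket A B) (bracket A C)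
  | .or B C => .or (bracket A B) (bracket A C)
  | .imp B C => .imp A (.imp B C)
  | B => B

def listConj : List Form → Form
  | [] => Form.top
  | [A] => A
  | A :: l => .and A (listConj l)

def listDisj : List Form → Form
  | [] => Form.bot
  | [A] => A
  | A :: l => .or A (listDisj l)

/-- the relation ▶ : the smallest relation satisfying A1–A4 and B1–B3.
In B2 a (finite) set of implications is represented by a list `X` of pairs `(E, F)`
standing for the implications `E → F`. -/
inductive Pres : Form → Form → Prop
  | a1 {A B} : iK4Proves (.imp A B) → Pres A B
  | a2 {A B C} : Pres A B → Pres B C → Pres A C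
  | a3 {A B C} : Pres C A → Pres C B → Pres C (.and A B)
  | a4 {A B} : Pres A B → Pres (.box A) (.box B)
  | b1 {A B C} : Pres A C → Pres B C → Pres (.or A B) C
  | b2 (X : List (Form × Form)) (C : Form) :
      Pres (.imp (listConj (X.map fun p => Form.imp p.1 p.2)) C)
        (listDisj ((X.map Prod.fst ++ [C]).map
          (bracket (listConj (X.map fun p => Form.imp p.1 p.2)))))
  | b3 {A B C} : Pres A B → (C.isAtom ∨ C.isBoxed) → Pres (.imp C A) (.imp C B)

/-- the axioms of H_σ : LLe⁺ + CP_a + {□A→□B : A ▶ B}. -/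
def HsigmaAx : Form → Prop := fun F =>
  GLAx F ∨ LeplusAx F ∨ CPaAx F ∨ ∃ A B : Form, Pres A B ∧ F = .imp (.box A) (.box B)

/-- H_σ. -/
def HsigmaProves : Form → Prop := Proves HsigmaAx true

/-! ## NNIL/TNNIL approximations -/

/-- `star` is (a realization of) Visser's NNIL-algorithm: `star A` is the best NNIL
approximation of `A` from below. -/
def IsNNILApproxOp (star : Form → Form) : Prop :=
  ∀ A : Form, NNILc (star A) ∧ IPCbProves (.imp (star A) A) ∧
    ∀ B : Form, NNILc B → IPCbProves (.imp B A) → IPCbProves (.imp B (star A))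

/-- replace the outermost boxed subformulas of a formula by the fresh variables
`k, k+1, …` (left to right), returning the resulting non-modal skeleton together
with the list of bodies of removed boxes. -/
def strip : Form → ℕ → Form × List Form
  | .var n, _ => (.var n, [])
  | .bot, _ => (.bot, [])
  | .and A B, k =>
      let pa := strip A k
      let pb := strip B (k + pa.2.length)
      (.and pa.1 pb.1, pa.2 ++ pb.2)
  | .or A B, k =>
      let pa := strip A k
      let pb := strip B (k + pa.2.length)
      (.or pa.1 pb.1, pa.2 ++ pb.2)
  | .imp A B, k =>
      let pa := strip A k
      let pb := strip B (k + pa.2.length)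
      (.imp pa.1 pb.1, pa.2 ++ pb.2)
  | .box A, k => (.var k, [A])

/-- simultaneous substitution of formulas for variables. -/
def substF (f : ℕ → Form) : Form → Form
  | .var n => f n
  | .bot => .bot
  | .and A B => .and (substF f A) (substF f B)
  | .or A B => .or (substF f A) (substF f B)
  | .imp A B => .imp (substF f A) (substF f B)
  | .box A => .box (substF f A)

/-- fuelled version of the TNNIL approximation `A⁺`:
`A⁺ := (A')^*[pᵢ | □Bᵢ⁺]` where `A = A'[pᵢ | □Bᵢ]` with `A'` non-modal. -/
def plusAux (star : Form → Form) : ℕ → Form → Form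
  | 0, A => A
  | fuel + 1, A =>
      let k := A.fvb
      let p := strip A k
      substF (fun n =>
        if k ≤ n ∧ n < k + p.2.length then
          .box (plusAux star fuel (p.2.getD (n - k) .bot))
        else .var n) (star p.1)

/-- the TNNIL approximation `A⁺` (relative to a realization `star` of the NNIL-algorithm). -/
def plusF (star : Form → Form) (A : Form) : Form := plusAux star (A.bdep + 1) A

/-- `A⁻`: writing `A = B(□C₁,…,□Cₙ)` with `B` non-modal, `A⁻ := B(□C₁⁺,…,□Cₙ⁺)`. -/
def minusF (star : Form → Form) (A : Form) : Form :=
  let k := A.fvb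
  let p := strip A k
  substF (fun n =>
    if k ≤ n ∧ n < k + p.2.length then
      .box (plusF star (p.2.getD (n - k) .bot))
    else .var n) p.1

/-- the box translation A^□. -/
def boxTr : Form → Form
  | .var n => Form.boxdot (.var n)
  | .bot => Form.boxdot .bot
  | .and A B => .and (boxTr A) (boxTr B)
  | .or A B => .or (boxTr A) (boxTr B)
  | .imp A B => Form.boxdot (.imp (boxTr A) (boxTr B))
  | .box A => .box (boxTr A)

/-- a Gödel numbering of modal formulas. -/
def encodeForm : Form → ℕ
  | .var n => Nat.pair 0 n
  | .bot => Nat.pair 1 0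
  | .and A B => Nat.pair 2 (Nat.pair (encodeForm A) (encodeForm B))
  | .or A B => Nat.pair 3 (Nat.pair (encodeForm A) (encodeForm B))
  | .imp A B => Nat.pair 4 (Nat.pair (encodeForm A) (encodeForm B))
  | .box A => Nat.pair 5 (encodeForm A)

/-! ## Propositional Kripke models -/

/-- Kripke models for intuitionistic modal logic. -/
structure PKripke where
  W : Type
  le : W → W → Prop
  r : W → W → Prop
  V : W → ℕ → Prop
  le_refl : ∀ w, le w w
  le_trans : ∀ {a b c}, le a b → le b c → le a c
  le_antisymm : ∀ {a b}, le a b → le b a → a = b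
  le_r : ∀ {a b c}, le a b → r b c → r a c
  mono : ∀ {a b : W} {n : ℕ}, le a b → V a n → V b n

/-- the forcing relation of a propositional modal Kripke model. -/
def pforces (M : PKripke) : Form → M.W → Prop
  | .var n, w => M.V w n
  | .bot, _ => False
  | .and A B, w => pforces M A w ∧ pforces M B w
  | .or A B, w => pforces M A w ∨ pforces M B w
  | .imp A B, w => ∀ v, M.le w v → pforces M A v → pforces M B v
  | .box A, w => ∀ v, M.r w v → pforces M A v

namespace PKripke

/-- brilliant: (R;≤) ⊆ R. -/
def Brilliant (M : PKripke) : Prop := ∀ {a b c : M.W}, M.r a b → M.le b c → M.r a c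

/-- reverse well-founded: well-founded with respect to R⁻¹. -/
def RevWF (M : PKripke) : Prop := WellFounded (fun a b : M.W => M.r b a)

/-- perfect: brilliant, reverse well-founded, and R ⊆ <. -/
def Perfect (M : PKripke) : Prop :=
  M.Brilliant ∧ M.RevWF ∧ ∀ {a b : M.W}, M.r a b → M.le a b ∧ a ≠ b

/-- the partial order (W,≤) is a tree: it has a root and the set of predecessors
of every node is linearly ordered. -/
def TreeFrame (M : PKripke) : Prop :=
  (∃ root : M.W, ∀ w, M.le root w) ∧
  ∀ w u v : M.W, M.le u w → M.le v w → (M.le u v ∨ M.le v u)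

end PKripke

/-! ## First-order arithmetic -/

/-- terms of the language (S, +, ·, <, 0) (de Bruijn variables). -/
inductive ATerm : Type
  | var : ℕ → ATerm
  | zero : ATerm
  | succ : ATerm → ATerm
  | add : ATerm → ATerm → ATerm
  | mul : ATerm → ATerm → ATerm
  deriving DecidableEq

namespace ATerm

def lift : ATerm → ℕ → ATerm
  | var n, d => if n < d then var n else var (n + 1)
  | zero, _ => zero
  | succ t, d => succ (t.lift d)
  | add t u, d => add (t.lift d) (u.lift d)
  | mul t u, d => mul (t.lift d) (u.lift d)

def subst : ATerm → ℕ → ATerm → ATerm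
  | var n, k, s => if n < k then var n else if n = k then s else var (n - 1)
  | zero, _, _ => zero
  | succ t, k, s => succ (t.subst k s)
  | add t u, k, s => add (t.subst k s) (u.subst k s)
  | mul t u, k, s => mul (t.subst k s) (u.subst k s)

/-- non-binding substitution: replace `var k` by `s`, leaving other variables alone. -/
def substId : ATerm → ℕ → ATerm → ATerm
  | var n, k, s => if n = k then s else var n
  | zero, _, _ => zero
  | succ t, k, s => succ (t.substId k s)
  | add t u, k, s => add (t.substId k s) (u.substId k s)
  | mul t u, k, s => mul (t.substId k s) (u.substId k s)

/-- all variables have index < k. -/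
def vlt : ATerm → ℕ → Prop
  | var n, k => n < k
  | zero, _ => True
  | succ t, k => t.vlt k
  | add t u, k => t.vlt k ∧ u.vlt k
  | mul t u, k => t.vlt k ∧ u.vlt k

/-- evaluation in the standard model ℕ. -/
def evalN : ATerm → (ℕ → ℕ) → ℕ
  | var n, ρ => ρ n
  | zero, _ => 0
  | succ t, ρ => t.evalN ρ + 1
  | add t u, ρ => t.evalN ρ + u.evalN ρ
  | mul t u, ρ => t.evalN ρ * u.evalN ρ

def fvB : ATerm → ℕ
  | var n => n + 1
  | zero => 0
  | succ t => t.fvB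
  | add t u => max t.fvB u.fvB
  | mul t u => max t.fvB u.fvB

/-- a Gödel numbering of terms. -/
def code : ATerm → ℕ
  | var n => Nat.pair 0 n
  | zero => Nat.pair 1 0
  | succ t => Nat.pair 2 t.code
  | add t u => Nat.pair 3 (Nat.pair t.code u.code)
  | mul t u => Nat.pair 4 (Nat.pair t.code u.code)

end ATerm

/-- the numeral of a natural number. -/
def numeral : ℕ → ATerm
  | 0 => .zero
  | n + 1 => .succ (numeral n)

/-- extend an environment by one value at index 0. -/
def econs {α : Sort*} (b : α) (ρ : ℕ → α) : ℕ → α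
  | 0 => b
  | n + 1 => ρ n

/-- first-order formulas of arithmetic (de Bruijn variables). -/
inductive AForm : Type
  | eq : ATerm → ATerm → AForm
  | lt : ATerm → ATerm → AForm
  | fal : AForm
  | and : AForm → AForm → AForm
  | or : AForm → AForm → AForm
  | imp : AForm → AForm → AForm
  | all : AForm → AForm
  | ex : AForm → AForm
  deriving DecidableEq

namespace AForm

def neg (A : AForm) : AForm := imp A fal

def iffA (A B : AForm) : AForm := and (imp A B) (imp B A)

def lift : AForm → ℕ → AForm
  | eq t u, d => eq (t.lift d) (u.lift d)
  | lt t u, d => lt (t.lift d) (u.lift d)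
  | fal, _ => fal
  | and A B, d => and (A.lift d) (B.lift d)
  | or A B, d => or (A.lift d) (B.lift d)
  | imp A B, d => imp (A.lift d) (B.lift d)
  | all A, d => all (A.lift (d + 1))
  | ex A, d => ex (A.lift (d + 1))

/-- capture-avoiding substitution of a term for variable `k` (instantiating a binder). -/
def subst : AForm → ℕ → ATerm → AForm
  | eq t u, k, s => eq (t.subst k s) (u.subst k s)
  | lt t u, k, s => lt (t.subst k s) (u.subst k s)
  | fal, _, _ => fal
  | and A B, k, s => and (A.subst k s) (B.subst k s)
  | or A B, k, s => or (A.subst k s) (B.subst k s)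
  | imp A B, k, s => imp (A.subst k s) (B.subst k s)
  | all A, k, s => all (A.subst (k + 1) (s.lift 0))
  | ex A, k, s => ex (A.subst (k + 1) (s.lift 0))

/-- non-binding substitution: replace the free variable `k` by `s`. -/
def substId : AForm → ℕ → ATerm → AForm
  | eq t u, k, s => eq (t.substId k s) (u.substId k s)
  | lt t u, k, s => lt (t.substId k s) (u.substId k s)
  | fal, _, _ => fal
  | and A B, k, s => and (A.substId k s) (B.substId k s)
  | or A B, k, s => or (A.substId k s) (B.substId k s)
  | imp A B, k, s => imp (A.substId k s) (B.substId k s)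
  | all A, k, s => all (A.substId (k + 1) (s.lift 0))
  | ex A, k, s => ex (A.substId (k + 1) (s.lift 0))

/-- all free variables have index < k. -/
def vlt : AForm → ℕ → Prop
  | eq t u, k => t.vlt k ∧ u.vlt k
  | lt t u, k => t.vlt k ∧ u.vlt k
  | fal, _ => True
  | and A B, k => A.vlt k ∧ B.vlt k
  | or A B, k => A.vlt k ∧ B.vlt k
  | imp A B, k => A.vlt k ∧ B.vlt k
  | all A, k => A.vlt (k + 1)
  | ex A, k => A.vlt (k + 1)

/-- a bound on the free variables of a formula. -/
def fvB : AForm → ℕ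
  | eq t u => max t.fvB u.fvB
  | lt t u => max t.fvB u.fvB
  | fal => 0
  | and A B => max A.fvB B.fvB
  | or A B => max A.fvB B.fvB
  | imp A B => max A.fvB B.fvB
  | all A => A.fvB - 1
  | ex A => A.fvB - 1

/-- classical (Tarskian) satisfaction in the standard model ℕ. -/
def SatN : AForm → (ℕ → ℕ) → Prop
  | eq t u, ρ => t.evalN ρ = u.evalN ρ
  | lt t u, ρ => t.evalN ρ < u.evalN ρ
  | fal, _ => False
  | and A B, ρ => A.SatN ρ ∧ B.SatN ρ
  | or A B, ρ => A.SatN ρ ∨ B.SatN ρ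
  | imp A B, ρ => A.SatN ρ → B.SatN ρ
  | all A, ρ => ∀ n : ℕ, A.SatN (econs n ρ)
  | ex A, ρ => ∃ n : ℕ, A.SatN (econs n ρ)

/-- a Gödel numbering of arithmetic formulas. -/
def code : AForm → ℕ
  | eq t u => Nat.pair 0 (Nat.pair t.code u.code)
  | lt t u => Nat.pair 1 (Nat.pair t.code u.code)
  | fal => Nat.pair 2 0
  | and A B => Nat.pair 3 (Nat.pair A.code B.code)
  | or A B => Nat.pair 4 (Nat.pair A.code B.code)
  | imp A B => Nat.pair 5 (Nat.pair A.code B.code)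
  | all A => Nat.pair 6 A.code
  | ex A => Nat.pair 7 A.code

end AForm

/-- Δ₀ formulas: only bounded quantifiers. -/
inductive Delta0 : AForm → Prop
  | eq (t u) : Delta0 (.eq t u)
  | lt (t u) : Delta0 (.lt t u)
  | fal : Delta0 .fal
  | and {A B} : Delta0 A → Delta0 B → Delta0 (.and A B)
  | or {A B} : Delta0 A → Delta0 B → Delta0 (.or A B)
  | imp {A B} : Delta0 A → Delta0 B → Delta0 (.imp A B)
  | ball (t : ATerm) {A} : Delta0 A → Delta0 (.all (.imp (.lt (.var 0) (t.lift 0)) A))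
  | bex (t : ATerm) {A} : Delta0 A → Delta0 (.ex (.and (.lt (.var 0) (t.lift 0)) A))

/-- Σ₁ formulas: existential quantifiers over a Δ₀ matrix. -/
inductive Sigma1 : AForm → Prop
  | of_delta0 {A} : Delta0 A → Sigma1 A
  | ex {A} : Sigma1 A → Sigma1 (.ex A)

/-- a Hilbert-style proof system for intuitionistic first-order logic with equality,
from a set `T` of (closed) non-logical axioms. -/
inductive Prf (T : AForm → Prop) : AForm → Prop
  | hyp {A} : T A → Prf T A
  | mp {A B} : Prf T (.imp A B) → Prf T A → Prf T B
  | gen {A} : Prf T A → Prf T (.all A)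
  | k (A B) : Prf T (.imp A (.imp B A))
  | s (A B C) : Prf T (.imp (.imp A (.imp B C)) (.imp (.imp A B) (.imp A C)))
  | pair (A B) : Prf T (.imp A (.imp B (.and A B)))
  | fst (A B) : Prf T (.imp (.and A B) A)
  | snd (A B) : Prf T (.imp (.and A B) B)
  | inl (A B) : Prf T (.imp A (.or A B))
  | inr (A B) : Prf T (.imp B (.or A B))
  | cases (A B C) : Prf T (.imp (.imp A C) (.imp (.imp B C) (.imp (.or A B) C)))
  | exfalso (A) : Prf T (.imp .fal A)
  | allE (A : AForm) (t : ATerm) : Prf T (.imp (.all A) (A.subst 0 t))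
  | allShift (A B : AForm) : Prf T (.imp (.all (.imp (B.lift 0) A)) (.imp B (.all A)))
  | exI (A : AForm) (t : ATerm) : Prf T (.imp (A.subst 0 t) (.ex A))
  | exE (A B : AForm) : Prf T (.imp (.all (.imp A (B.lift 0))) (.imp (.ex A) B))
  | eqRefl : Prf T (.all (.eq (.var 0) (.var 0)))
  | leibniz (A : AForm) : Prf T (.all (.all (.imp (.eq (.var 1) (.var 0))
      (.imp (((A.lift 1).lift 1).substId 0 (.var 1))
            (((A.lift 1).lift 1).substId 0 (.var 0))))))

/-- iterated universal quantification. -/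
def ucAux : ℕ → AForm → AForm
  | 0, A => A
  | k + 1, A => ucAux k (.all A)

/-- universal closure. -/
def uc (A : AForm) : AForm := ucAux A.fvB A

/-- the induction axiom for the formula A (induction on variable 0). -/
def indAx (A : AForm) : AForm :=
  uc (.imp (.and (A.subst 0 .zero) (.all (.imp A (A.substId 0 (.succ (.var 0))))))
      (.all A))

/-- the axioms Q1–Q8. -/
inductive QAx : AForm → Prop
  | q1 : QAx (.all (.imp (.eq (.succ (.var 0)) .zero) .fal))
  | q2 : QAx (.all (.all (.imp (.eq (.succ (.var 1)) (.succ (.var 0))) (.eq (.var 1) (.var 0)))))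
  | q3 : QAx (.all (.or (.eq (.var 0) .zero) (.ex (.eq (.succ (.var 0)) (.var 1)))))
  | q4 : QAx (.all (.eq (.add (.var 0) .zero) (.var 0)))
  | q5 : QAx (.all (.all (.eq (.add (.var 1) (.succ (.var 0))) (.succ (.add (.var 1) (.var 0))))))
  | q6 : QAx (.all (.eq (.mul (.var 0) .zero) .zero))
  | q7 : QAx (.all (.all (.eq (.mul (.var 1) (.succ (.var 0))) (.add (.mul (.var 1) (.var 0)) (.var 1)))))
  | q8 : QAx (.all (.all (AForm.iffA (.lt (.var 1) (.var 0))
      (.ex (.eq (.add (.var 2) (.succ (.var 0))) (.var 1))))))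

/-- the axioms of Heyting Arithmetic: Q1–Q8 and full induction. -/
def HAAx : AForm → Prop := fun A => QAx A ∨ ∃ B : AForm, A = indAx B

/-- provability in HA. -/
def HAProves : AForm → Prop := Prf HAAx

/-- interface for the standard arithmetized provability predicate `Prov_HA` of HA:
`Pr A` is the Σ₁ sentence `Prov_HA(⌜A⌝)`. -/
structure ProvPred where
  Pr : AForm → AForm
  sentence : ∀ A, (Pr A).vlt 0
  sigma1 : ∀ A, Sigma1 (Pr A)
  correct : ∀ A : AForm, ((Pr A).SatN (fun _ => 0) ↔ HAProves A)
  dNec : ∀ A, HAProves A → HAProves (Pr A)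
  dK : ∀ A B, HAProves (.imp (Pr (.imp A B)) (.imp (Pr A) (Pr B)))
  dSigma : ∀ A, Sigma1 A → A.vlt 0 → HAProves (.imp A (Pr A))
  dLob : ∀ A, HAProves (.imp (Pr (.imp (Pr A) A)) (Pr A))

/-- the arithmetical interpretation `σ_HA` of modal formulas determined by a
substitution `σ` and a provability predicate `Pr`. -/
def interp (Pr : AForm → AForm) (σ : ℕ → AForm) : Form → AForm
  | .var n => σ n
  | .bot => .fal
  | .and A B => .and (interp Pr σ A) (interp Pr σ B)
  | .or A B => .or (interp Pr σ A) (interp Pr σ B)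
  | .imp A B => .imp (interp Pr σ A) (interp Pr σ B)
  | .box A => Pr (interp Pr σ A)

/-- σ is an arithmetical substitution: it maps atomic variables to sentences. -/
def ArithSubst (σ : ℕ → AForm) : Prop := ∀ n, (σ n).vlt 0

/-- σ is a Σ₁-substitution: it maps atomic variables to Σ₁ sentences. -/
def Sigma1Subst (σ : ℕ → AForm) : Prop := ∀ n, Sigma1 (σ n) ∧ (σ n).vlt 0

/-! ## The theories HAₓ and indexed provability (for the refined Leivant principle) -/

/-- induction formulas of the special shape (A→B)→B with A, B ∈ Σ₁. -/
def shapeInd (A : AForm) : Prop := ∃ S Tf : AForm, Sigma1 S ∧ Sigma1 Tf ∧ A = .imp (.imp S Tf) Tf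

/-- the axioms of HAₓ: Q1-Q8, and induction restricted to formulas of the shape
(A→B)→B with A,B ∈ Σ₁ or with Gödel number ≤ x. -/
def HAxAx (x : ℕ) : AForm → Prop := fun A =>
  QAx A ∨ ∃ B : AForm, (shapeInd B ∨ B.code ≤ x) ∧ A = indAx B

/-- interface for the arithmetized bounded provability predicates `□ₓ`:
`PrB A` is the Σ₁ formula with free variable 0 expressing `Prov_{HA_{v₀}}(⌜A⌝)`, and
`PrBSub A` (for `A` with one free variable) is the Σ₁ formula with free variables 0, 1
expressing `Prov_{HA_{v₀}}(⌜A(v̇₁)⌝)`. -/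
structure BddProvPred where
  PrB : AForm → AForm
  PrBSub : AForm → AForm
  PrB_vlt : ∀ A, (PrB A).vlt 1
  PrB_sigma1 : ∀ A, Sigma1 (PrB A)
  PrB_correct : ∀ (A : AForm) (n : ℕ),
    ((PrB A).SatN (fun i => if i = 0 then n else 0) ↔ Prf (HAxAx n) A)
  PrBSub_vlt : ∀ A, (PrBSub A).vlt 2
  PrBSub_sigma1 : ∀ A, Sigma1 (PrBSub A)
  PrBSub_correct : ∀ (A : AForm) (n m : ℕ),
    ((PrBSub A).SatN (fun i => if i = 0 then n else m) ↔ Prf (HAxAx n) (A.subst 0 (numeral m)))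

/-! ## First-order Kripke models of HA -/

/-- a first-order Kripke model for the language of arithmetic over the frame `(W, le)`:
each node carries a classical structure, and the structure at a smaller node is a weak
substructure of the structure at a bigger one (realized as subsets of a common universe,
closed under the operations). -/
structure FOKripke (W : Type) (le : W → W → Prop) where
  U : Type
  dom : W → Set U
  zero : U
  succ : U → U
  add : U → U → U
  mul : U → U → U
  ltR : U → U → Prop
  dom_mono : ∀ {a b : W}, le a b → dom a ⊆ dom b
  zero_mem : ∀ a, zero ∈ dom a
  succ_mem : ∀ a x, x ∈ dom a → succ x ∈ dom a
  add_mem : ∀ a x y, x ∈ dom a → y ∈ dom a → add x y ∈ dom a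
  mul_mem : ∀ a x y, x ∈ dom a → y ∈ dom a → mul x y ∈ dom a

/-- evaluation of a term in a first-order Kripke model. -/
def tevalK {W : Type} {le : W → W → Prop} (M : FOKripke W le) (ρ : ℕ → M.U) : ATerm → M.U
  | .var n => ρ n
  | .zero => M.zero
  | .succ t => M.succ (tevalK M ρ t)
  | .add t u => M.add (tevalK M ρ t) (tevalK M ρ u)
  | .mul t u => M.mul (tevalK M ρ t) (tevalK M ρ u)

/-- the forcing relation of a first-order Kripke model. -/
def FOForces {W : Type} {le : W → W → Prop} (M : FOKripke W le) :
    AForm → W → (ℕ → M.U) → Prop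
  | .eq t u, _, ρ => tevalK M ρ t = tevalK M ρ u
  | .lt t u, _, ρ => M.ltR (tevalK M ρ t) (tevalK M ρ u)
  | .fal, _, _ => False
  | .and A B, w, ρ => FOForces M A w ρ ∧ FOForces M B w ρ
  | .or A B, w, ρ => FOForces M A w ρ ∨ FOForces M B w ρ
  | .imp A B, w, ρ => ∀ v, le w v → FOForces M A v ρ → FOForces M B v ρ
  | .all A, w, ρ => ∀ v, le w v → ∀ b ∈ M.dom v, FOForces M A v (econs b ρ)
  | .ex A, w, ρ => ∃ b ∈ M.dom w, FOForces M A w (econs b ρ)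

/-- the Kripke model forces all axioms of HA. -/
def ForcesHA {W : Type} {le : W → W → Prop} (M : FOKripke W le) : Prop :=
  ∀ A : AForm, HAAx A → ∀ w : W, FOForces M A w (fun _ => M.zero)

end PLHA
namespace PLHA
open Form

/-! ### A natural-deduction kit for `Proves` -/

def cimps : List Form → Form → Form
  | [], B => B
  | A :: Γ, B => cimps Γ (A.imp B)

def ND (Ax : Form → Prop) (b : Bool) (Γ : List Form) (B : Form) : Prop :=
  Proves Ax b (cimps Γ B)

section Kit
variable {Ax : Form → Prop} {b : Bool}

lemma imp_self' (A : Form) : Proves Ax b (A.imp A) :=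
  Proves.mp (Proves.mp (Proves.ipc (IpcAx.a2 A (A.imp A) A))
    (Proves.ipc (IpcAx.a1 A (A.imp A)))) (Proves.ipc (IpcAx.a1 A A))

lemma ndThm {Γ : List Form} {B : Form} (h : Proves Ax b B) : ND Ax b Γ B := by
  induction Γ generalizing B with
  | nil => exact h
  | cons C Γ ih => exact ih (Proves.mp (Proves.ipc (IpcAx.a1 B C)) h)

lemma ndMp {Γ : List Form} {A B : Form} (h1 : ND Ax b Γ (A.imp B)) (h2 : ND Ax b Γ A) :
    ND Ax b Γ B := by
  induction Γ generalizing A B with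
  | nil => exact Proves.mp h1 h2
  | cons C Γ ih => exact ih (ih (ndThm (Proves.ipc (IpcAx.a2 C A B))) h1) h2

lemma ndIntro {Γ : List Form} {A B : Form} (h : ND Ax b (A :: Γ) B) : ND Ax b Γ (A.imp B) := h

lemma ndOfNil {B : Form} (h : ND Ax b [] B) : Proves Ax b B := h

lemma ndHyp0 {Γ : List Form} {A : Form} : ND Ax b (A :: Γ) A :=
  ndThm (Γ := Γ) (imp_self' A)

lemma ndWk {Γ : List Form} {A B : Form} (h : ND Ax b Γ B) : ND Ax b (A :: Γ) B :=
  ndMp (Γ := Γ) (ndThm (Proves.ipc (IpcAx.a1 B A))) h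

lemma ndHyp1 {Γ : List Form} {A B : Form} : ND Ax b (B :: A :: Γ) A := ndWk ndHyp0
lemma ndHyp2 {Γ : List Form} {A B C : Form} : ND Ax b (C :: B :: A :: Γ) A := ndWk ndHyp1

lemma ndAndI {Γ : List Form} {A B : Form} (h1 : ND Ax b Γ A) (h2 : ND Ax b Γ B) :
    ND Ax b Γ (A.and B) := ndMp (ndMp (ndThm (Proves.ipc (IpcAx.a3 A B))) h1) h2

lemma ndAnd1 {Γ : List Form} {A B : Form} (h : ND Ax b Γ (A.and B)) : ND Ax b Γ A :=
  ndMp (ndThm (Proves.ipc (IpcAx.a4 A B))) h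

lemma ndAnd2 {Γ : List Form} {A B : Form} (h : ND Ax b Γ (A.and B)) : ND Ax b Γ B :=
  ndMp (ndThm (Proves.ipc (IpcAx.a5 A B))) h

lemma ndOrE {Γ : List Form} {A B C : Form} (h : ND Ax b Γ (A.or B))
    (h1 : ND Ax b Γ (A.imp C)) (h2 : ND Ax b Γ (B.imp C)) : ND Ax b Γ C :=
  ndMp (ndMp (ndMp (ndThm (Proves.ipc (IpcAx.a8 A B C))) h1) h2) h

lemma prComp {A B C : Form} (h1 : Proves Ax b (A.imp B)) (h2 : Proves Ax b (B.imp C)) :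
    Proves Ax b (A.imp C) :=
  ndOfNil (ndIntro (ndMp (ndThm h2) (ndMp (ndThm h1) ndHyp0)))

lemma orCases {A B C : Form} (h1 : Proves Ax b (A.imp C)) (h2 : Proves Ax b (B.imp C)) :
    Proves Ax b ((A.or B).imp C) :=
  ndOfNil (ndIntro (ndOrE ndHyp0 (ndThm h1) (ndThm h2)))

lemma andMono {A B A' B' : Form} (h1 : Proves Ax b (A.imp A')) (h2 : Proves Ax b (B.imp B')) :
    Proves Ax b ((A.and B).imp (A'.and B')) :=
  ndOfNil (ndIntro (ndAndI (ndMp (ndThm h1) (ndAnd1 ndHyp0)) (ndMp (ndThm h2) (ndAnd2 ndHyp0))))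

lemma orMono {A B A' B' : Form} (h1 : Proves Ax b (A.imp A')) (h2 : Proves Ax b (B.imp B')) :
    Proves Ax b ((A.or B).imp (A'.or B')) :=
  orCases (prComp h1 (Proves.ipc (IpcAx.a6 A' B'))) (prComp h2 (Proves.ipc (IpcAx.a7 A' B')))

end Kit

/-! ### Modal kit (for any `Ax` containing the GL axioms, with necessitation) -/

section Modal
variable {Ax : Form → Prop} (hGL : ∀ F, GLAx F → Ax F)
set_option linter.unusedSectionVars false
include hGL

lemma prK (A B : Form) :
    Proves Ax true ((Form.box (A.imp B)).imp ((Form.box A).imp (Form.box B))) :=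
  Proves.ax (hGL _ (GLAx.k A B))

lemma pr4 (A : Form) : Proves Ax true ((Form.box A).imp (Form.box (Form.box A))) :=
  Proves.ax (hGL _ (GLAx.four A))

lemma prLob (A : Form) :
    Proves Ax true ((Form.box ((Form.box A).imp A)).imp (Form.box A)) :=
  Proves.ax (hGL _ (GLAx.lob A))

omit hGL in lemma necP {A : Form} (h : Proves Ax true A) : Proves Ax true (Form.box A) :=
  Proves.nec rfl h

lemma boxMono {A B : Form} (h : Proves Ax true (A.imp B)) :
    Proves Ax true ((Form.box A).imp (Form.box B)) :=
  Proves.mp (prK hGL A B) (necP h)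

lemma boxPair (A B : Form) :
    Proves Ax true ((Form.box A).imp ((Form.box B).imp (Form.box (A.and B)))) := by
  refine ndOfNil (ndIntro (ndIntro ?_))
  have t1 : ND Ax true [Form.box B, Form.box A] (Form.box (B.imp (A.and B))) :=
    ndMp (ndThm (boxMono hGL (Proves.ipc (IpcAx.a3 A B)))) ndHyp1
  exact ndMp (ndMp (ndThm (prK hGL B (A.and B))) t1) ndHyp0

lemma boxMono2 {A B C : Form} (h : Proves Ax true (A.imp (B.imp C))) :
    Proves Ax true ((Form.box A).imp ((Form.box B).imp (Form.box C))) := by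
  refine ndOfNil (ndIntro (ndIntro ?_))
  exact ndMp (ndMp (ndThm (prK hGL B C)) (ndMp (ndThm (boxMono hGL h)) ndHyp1)) ndHyp0

omit hGL in lemma bdE (A : Form) : Proves Ax true ((Form.boxdot A).imp A) :=
  Proves.ipc (IpcAx.a4 A (Form.box A))

omit hGL in lemma bdB (A : Form) : Proves Ax true ((Form.boxdot A).imp (Form.box A)) :=
  Proves.ipc (IpcAx.a5 A (Form.box A))

omit hGL in lemma bdI {A : Form} (h : Proves Ax true A) : Proves Ax true (Form.boxdot A) :=
  Proves.mp (Proves.mp (Proves.ipc (IpcAx.a3 A (Form.box A))) h) (necP h)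

lemma boxdotBox (A : Form) :
    Proves Ax true ((Form.boxdot A).imp (Form.box (Form.boxdot A))) := by
  refine ndOfNil (ndIntro ?_)
  have ba : ND Ax true [Form.boxdot A] (Form.box A) := ndMp (ndThm (bdB A)) ndHyp0
  have bba := ndMp (ndThm (pr4 hGL A)) ba
  exact ndMp (ndMp (ndThm (boxPair hGL A (Form.box A))) ba) bba

lemma impBoxdot {X P : Form} (h1 : Proves Ax true (X.imp (Form.box X)))
    (h2 : Proves Ax true (X.imp P)) : Proves Ax true (X.imp (Form.boxdot P)) := by
  refine ndOfNil (ndIntro ?_)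
  have p : ND Ax true [X] P := ndMp (ndThm h2) ndHyp0
  have bx : ND Ax true [X] (Form.box X) := ndMp (ndThm h1) ndHyp0
  have bp := ndMp (ndThm (boxMono hGL h2)) bx
  exact ndAndI p bp

/-- L1 : `A^□ → □A^□`. -/
lemma btSelf (A : Form) :
    Proves Ax true ((boxTr A).imp (Form.box (boxTr A))) := by
  induction A with
  | var n => exact boxdotBox hGL _
  | bot => exact boxdotBox hGL _
  | imp A B ihA ihB => exact boxdotBox hGL _
  | box A ih => exact pr4 hGL _
  | and A B ihA ihB =>
      refine ndOfNil (ndIntro ?_)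
      have bx : ND Ax true [(boxTr A).and (boxTr B)] (Form.box (boxTr A)) :=
        ndMp (ndThm ihA) (ndAnd1 ndHyp0)
      have by' : ND Ax true [(boxTr A).and (boxTr B)] (Form.box (boxTr B)) :=
        ndMp (ndThm ihB) (ndAnd2 ndHyp0)
      exact ndMp (ndMp (ndThm (boxPair hGL _ _)) bx) by'
  | or A B ihA ihB =>
      exact orCases (prComp ihA (boxMono hGL (Proves.ipc (IpcAx.a6 _ _))))
        (prComp ihB (boxMono hGL (Proves.ipc (IpcAx.a7 _ _))))

end Modal

end PLHA

namespace PLHA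
open Form

/-! ### Box translation of LC into iGL -/

section BTKit
variable {Ax : Form → Prop} {b : Bool}

lemma bt_th2 (X Y Z : Form) :
    Proves Ax b ((X.imp (Form.boxdot (Y.imp Z))).imp ((X.imp Y).imp (X.imp Z))) := by
  refine ndOfNil (ndIntro (ndIntro (ndIntro ?_)))
  have y : ND Ax b [X, X.imp Y, X.imp (Form.boxdot (Y.imp Z))] Y := ndMp ndHyp1 ndHyp0
  have byz : ND Ax b [X, X.imp Y, X.imp (Form.boxdot (Y.imp Z))] (Form.boxdot (Y.imp Z)) :=
    ndMp ndHyp2 ndHyp0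
  exact ndMp (ndAnd1 byz) y

end BTKit

section BT
variable {Ax : Form → Prop} (hGL : ∀ F, GLAx F → Ax F)
set_option linter.unusedSectionVars false
include hGL

lemma bt_a1 {X Y : Form} (hX : Proves Ax true (X.imp (Form.box X))) :
    Proves Ax true (Form.boxdot (X.imp (Form.boxdot (Y.imp X)))) :=
  bdI (impBoxdot hGL hX (Proves.ipc (IpcAx.a1 X Y)))

lemma bt_a3 {X Y : Form} (hX : Proves Ax true (X.imp (Form.box X))) :
    Proves Ax true (Form.boxdot (X.imp (Form.boxdot (Y.imp (X.and Y))))) :=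
  bdI (impBoxdot hGL hX (Proves.ipc (IpcAx.a3 X Y)))

lemma bt_a2 (X Y Z : Form) :
    Proves Ax true (Form.boxdot ((Form.boxdot (X.imp (Form.boxdot (Y.imp Z)))).imp
      (Form.boxdot ((Form.boxdot (X.imp Y)).imp (Form.boxdot (X.imp Z)))))) := by
  have th : Proves Ax true ((X.imp (Form.boxdot (Y.imp Z))).imp ((X.imp Y).imp (X.imp Z))) :=
    bt_th2 X Y Z
  have core : ND Ax true [Form.boxdot (X.imp Y), Form.boxdot (X.imp (Form.boxdot (Y.imp Z)))]
      (X.imp Z) := ndMp (ndMp (ndThm th) (ndAnd1 ndHyp1)) (ndAnd1 ndHyp0)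
  have boxp : ND Ax true [Form.boxdot (X.imp Y), Form.boxdot (X.imp (Form.boxdot (Y.imp Z)))]
      (Form.box (X.imp Z)) :=
    ndMp (ndMp (ndThm (prK hGL (X.imp Y) (X.imp Z)))
      (ndMp (ndThm (boxMono hGL th)) (ndAnd2 ndHyp1))) (ndAnd2 ndHyp0)
  have T0 : Proves Ax true ((Form.boxdot (X.imp (Form.boxdot (Y.imp Z)))).imp
      ((Form.boxdot (X.imp Y)).imp (Form.boxdot (X.imp Z)))) :=
    ndOfNil (ndIntro (ndIntro (ndAndI core boxp)))
  exact bdI (impBoxdot hGL (boxdotBox hGL _) T0)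

lemma bt_a8 (X Y Z : Form) :
    Proves Ax true (Form.boxdot ((Form.boxdot (X.imp Z)).imp
      (Form.boxdot ((Form.boxdot (Y.imp Z)).imp (Form.boxdot ((X.or Y).imp Z)))))) := by
  have th : Proves Ax true ((X.imp Z).imp ((Y.imp Z).imp ((X.or Y).imp Z))) :=
    Proves.ipc (IpcAx.a8 X Y Z)
  have core : ND Ax true [Form.boxdot (Y.imp Z), Form.boxdot (X.imp Z)] ((X.or Y).imp Z) :=
    ndMp (ndMp (ndThm th) (ndAnd1 ndHyp1)) (ndAnd1 ndHyp0)
  have boxp : ND Ax true [Form.boxdot (Y.imp Z), Form.boxdot (X.imp Z)]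
      (Form.box ((X.or Y).imp Z)) :=
    ndMp (ndMp (ndThm (boxMono2 hGL th)) (ndAnd2 ndHyp1)) (ndAnd2 ndHyp0)
  have T : Proves Ax true ((Form.boxdot (X.imp Z)).imp
      ((Form.boxdot (Y.imp Z)).imp (Form.boxdot ((X.or Y).imp Z)))) :=
    ndOfNil (ndIntro (ndIntro (ndAndI core boxp)))
  exact bdI (impBoxdot hGL (boxdotBox hGL _) T)

lemma bt_k (X Y : Form) :
    Proves Ax true (Form.boxdot ((Form.box (Form.boxdot (X.imp Y))).imp
      (Form.boxdot ((Form.box X).imp (Form.box Y))))) := by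
  have T : Proves Ax true ((Form.box (Form.boxdot (X.imp Y))).imp
      ((Form.box X).imp (Form.box Y))) :=
    prComp (boxMono hGL (bdE _)) (prK hGL X Y)
  exact bdI (impBoxdot hGL (pr4 hGL _) T)

lemma bt_lob (X : Form) :
    Proves Ax true (Form.boxdot ((Form.box (Form.boxdot ((Form.box X).imp X))).imp
      (Form.box X))) :=
  bdI (prComp (boxMono hGL (bdE _)) (prLob hGL X))

end BT

/-- If LC ⊢ A then iGL ⊢ A^□. -/
lemma bt_lemma {A : Form} (h : LCProves A) : iGLProves (boxTr A) := by
  have glh : ∀ F, GLAx F → GLAx F := fun _ h => h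
  induction h with
  | ax hx =>
      rcases hx with hx | ⟨B, rfl⟩
      · cases hx with
        | k A B => exact bt_k glh (boxTr A) (boxTr B)
        | four A => exact bdI (pr4 glh (boxTr A))
        | lob A => exact bt_lob glh (boxTr A)
      · exact bdI (btSelf glh B)
  | ipc hx =>
      cases hx with
      | a1 A B => exact bt_a1 glh (btSelf glh A)
      | a2 A B C => exact bt_a2 glh (boxTr A) (boxTr B) (boxTr C)
      | a3 A B => exact bt_a3 glh (btSelf glh A)
      | a4 A B => exact bdI (Proves.ipc (IpcAx.a4 (boxTr A) (boxTr B)))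
      | a5 A B => exact bdI (Proves.ipc (IpcAx.a5 (boxTr A) (boxTr B)))
      | a6 A B => exact bdI (Proves.ipc (IpcAx.a6 (boxTr A) (boxTr B)))
      | a7 A B => exact bdI (Proves.ipc (IpcAx.a7 (boxTr A) (boxTr B)))
      | a8 A B C => exact bt_a8 glh (boxTr A) (boxTr B) (boxTr C)
      | a9 A => exact bdI (prComp (bdE Form.bot) (Proves.ipc (IpcAx.a9 (boxTr A))))
  | mp h1 h2 ih1 ih2 => exact Proves.mp (Proves.mp (bdE _) ih1) ih2
  | nec hb h ih => exact Proves.nec rfl ih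

lemma provesMono {Ax Ax' : Form → Prop} {b : Bool} {A : Form}
    (hs : ∀ F, Ax F → Ax' F) (h : Proves Ax b A) : Proves Ax' b A := by
  induction h with
  | ax ha => exact Proves.ax (hs _ ha)
  | ipc ha => exact Proves.ipc ha
  | mp _ _ ih1 ih2 => exact Proves.mp ih1 ih2
  | nec hb _ ih => exact Proves.nec hb ih

end PLHA

namespace PLHA
open Form

/-! ### The main induction in LLe⁺ -/

private abbrev LAx : Form → Prop := fun F => GLAx F ∨ LeplusAx F ∨ CPaAx F

private lemma hL : ∀ F, GLAx F → LAx F := fun _ h => Or.inl h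

private lemma leP (A : Form) : Proves LAx true ((Form.box A).imp (Form.box A.lev)) :=
  Proves.ax (Or.inr (Or.inl ⟨A, rfl⟩))

private lemma cpVar (n : ℕ) : Proves LAx true ((Form.var n).imp (Form.box (Form.var n))) :=
  Proves.ax (Or.inr (Or.inr ⟨Form.var n, Or.inl ⟨n, rfl⟩, rfl⟩))

/-- From `⊡A^l → A^□` infer `□A → □A^□`, using Le⁺ and 4. -/
private lemma st3_of_st4 {A : Form}
    (h4 : Proves LAx true ((Form.boxdot A.lev).imp (boxTr A))) :
    Proves LAx true ((Form.box A).imp (Form.box (boxTr A))) := by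
  refine ndOfNil (ndIntro ?_)
  have bAl : ND LAx true [Form.box A] (Form.box A.lev) := ndMp (ndThm (leP A)) ndHyp0
  have bbAl := ndMp (ndThm (pr4 hL A.lev)) bAl
  have bdd : ND LAx true [Form.box A] (Form.box (Form.boxdot A.lev)) :=
    ndMp (ndMp (ndThm (boxPair hL A.lev (Form.box A.lev))) bAl) bbAl
  exact ndMp (ndThm (boxMono hL h4)) bdd

private lemma main4 {A : Form} (hA : TNNIL A) :
    Proves LAx true ((boxTr A).imp A) ∧
    (A.noi = true → Proves LAx true (A.imp (boxTr A))) ∧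
    Proves LAx true ((Form.box A).imp (Form.box (boxTr A))) ∧
    Proves LAx true ((Form.boxdot A.lev).imp (boxTr A)) := by
  induction hA with
  | var n =>
      have st4 : Proves LAx true ((Form.boxdot (Form.var n).lev).imp (boxTr (Form.var n))) :=
        imp_self' _
      exact ⟨bdE _, fun _ => impBoxdot hL (cpVar n) (imp_self' _), st3_of_st4 st4, st4⟩
  | bot =>
      have st4 : Proves LAx true ((Form.boxdot Form.bot.lev).imp (boxTr Form.bot)) :=
        imp_self' _
      exact ⟨bdE _, fun _ => Proves.ipc (IpcAx.a9 _), st3_of_st4 st4, st4⟩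
  | @and B C hB hC ihB ihC =>
      obtain ⟨i1B, i2B, i3B, i4B⟩ := ihB
      obtain ⟨i1C, i2C, i3C, i4C⟩ := ihC
      have st4 : Proves LAx true ((Form.boxdot (Form.and B C).lev).imp (boxTr (Form.and B C))) := by
        refine ndOfNil (ndIntro ?_)
        have hc : ND LAx true [Form.boxdot (B.lev.and C.lev)] (B.lev.and C.lev) := ndAnd1 ndHyp0
        have hbox : ND LAx true [Form.boxdot (B.lev.and C.lev)] (Form.box (B.lev.and C.lev)) :=
          ndAnd2 ndHyp0
        have bB := ndMp (ndThm (boxMono hL (Proves.ipc (IpcAx.a4 B.lev C.lev)))) hbox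
        have bC := ndMp (ndThm (boxMono hL (Proves.ipc (IpcAx.a5 B.lev C.lev)))) hbox
        have b1 := ndMp (ndThm i4B) (ndAndI (ndAnd1 hc) bB)
        have b2 := ndMp (ndThm i4C) (ndAndI (ndAnd2 hc) bC)
        exact ndAndI b1 b2
      refine ⟨andMono i1B i1C, ?_, st3_of_st4 st4, st4⟩
      intro h
      simp only [Form.noi, Bool.and_eq_true] at h
      exact andMono (i2B h.1) (i2C h.2)
  | @or B C hB hC ihB ihC =>
      obtain ⟨i1B, i2B, i3B, i4B⟩ := ihB
      obtain ⟨i1C, i2C, i3C, i4C⟩ := ihC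
      have st4 : Proves LAx true ((Form.boxdot (Form.or B C).lev).imp (boxTr (Form.or B C))) :=
        prComp (bdE _) (orCases (prComp i4B (Proves.ipc (IpcAx.a6 _ _)))
          (prComp i4C (Proves.ipc (IpcAx.a7 _ _))))
      refine ⟨orMono i1B i1C, ?_, st3_of_st4 st4, st4⟩
      intro h
      simp only [Form.noi, Bool.and_eq_true] at h
      exact orMono (i2B h.1) (i2C h.2)
  | @box B hB ihB =>
      obtain ⟨i1B, i2B, i3B, i4B⟩ := ihB
      have st4 : Proves LAx true ((Form.boxdot (Form.box B).lev).imp (boxTr (Form.box B))) :=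
        prComp (bdE _) i3B
      exact ⟨boxMono hL i1B, fun _ => i3B, st3_of_st4 st4, st4⟩
  | @imp B C hnoi hB hC ihB ihC =>
      obtain ⟨i1B, i2B, i3B, i4B⟩ := ihB
      obtain ⟨i1C, i2C, i3C, i4C⟩ := ihC
      have hlev : (Form.imp B C).lev = B.imp C.lev := by simp [Form.lev, hnoi]
      have st1 : Proves LAx true ((boxTr (Form.imp B C)).imp (Form.imp B C)) := by
        refine ndOfNil (ndIntro (ndIntro ?_))
        have b' : ND LAx true [B, Form.boxdot ((boxTr B).imp (boxTr C))] (boxTr B) :=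
          ndMp (ndThm (i2B hnoi)) ndHyp0
        have c' := ndMp (ndAnd1 ndHyp1) b'
        exact ndMp (ndThm i1C) c'
      have T : Proves LAx true ((Form.boxdot (B.imp C.lev)).imp ((boxTr B).imp (boxTr C))) := by
        refine ndOfNil (ndIntro (ndIntro ?_))
        have hB' : ND LAx true [boxTr B, Form.boxdot (B.imp C.lev)] (boxTr B) := ndHyp0
        have hb := ndMp (ndThm i1B) hB'
        have hcl := ndMp (ndAnd1 ndHyp1) hb
        have hbB' := ndMp (ndThm (btSelf hL B)) hB'
        have hbB := ndMp (ndThm (boxMono hL i1B)) hbB'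
        have hbcl := ndMp (ndMp (ndThm (prK hL B C.lev)) (ndAnd2 ndHyp1)) hbB
        exact ndMp (ndThm i4C) (ndAndI hcl hbcl)
      have st4 : Proves LAx true ((Form.boxdot (Form.imp B C).lev).imp (boxTr (Form.imp B C))) := by
        rw [hlev]
        exact impBoxdot hL (boxdotBox hL _) T
      refine ⟨st1, ?_, st3_of_st4 st4, st4⟩
      intro h
      simp [Form.noi] at h

end PLHA

namespace PLHA

/-- TNNIL-conservativity of LC over LLe⁺: for every A ∈ TNNIL,
if LC ⊢ A then LLe⁺ ⊢ A. -/
theorem LC_TNNIL_conservative_over_LLeplus (A : Form) (hA : TNNIL A) (h : LCProves A) :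
    LLeplusProves A := by
  have h1 : Proves GLAx true (boxTr A) := bt_lemma h
  have h2 : Proves LAx true (boxTr A) := provesMono (fun F hf => Or.inl hf) h1
  exact Proves.mp (main4 hA).1 h2

end PLHA
end

section
/- For every modal proposition A, H_σ ⊢ A⁻ ↔ A. -/
/-!
Writing `A = A'[pᵢ | □Bᵢ]` with `A'` non-modal, `A⁻ = A'[pᵢ | □Bᵢ⁺]`, so since provable equivalence
is a congruence it suffices that `H_σ ⊢ □B⁺ ↔ □B` for every `B`. By induction on the box depth,
`□B⁺` is equivalent to `□M` with `M := (B')^*[pᵢ | □Cᵢ]` where `B = B'[pᵢ | □Cᵢ]`. Now `M → B`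
is an instance of the IPC theorem `(B')^* → B'`, and `□B → □M` is an axiom of `H_σ` because
`B ▶ M`: the relation `▶` is closed under substituting atoms and boxed formulas, and `B' ▶ (B')^*`.

The last fact is the heart of the matter. Every formula `F` satisfies `F ▶ H` for an NNIL formula
`H` with `⊢ H → F`, hence `⊢ H → F^*` by optimality of `F^*`, and `F ▶ F^*` follows. Finding `H`
is Visser's NNIL algorithm carried out inside `▶`, for sequents `Γ ⇒ C` read as `⋀Γ → C`, by
induction on `Σ 4^wt`: compound formulas in `Γ` or `C` are decomposed along IPC-equivalences,
atoms and boxed formulas in `Γ` are pulled out by B3, and once no decomposition applies, B2 splits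
the sequent into disjuncts that are approximated through lighter sequents.
-/

namespace PLHA
open Form

inductive ND_s10 : List Form → Form → Prop
  | hyp {Γ A} : A ∈ Γ → ND_s10 Γ A
  | ax {Γ A} : IpcAx A → ND_s10 Γ A
  | mp {Γ A B} : ND_s10 Γ (.imp A B) → ND_s10 Γ A → ND_s10 Γ B

namespace ND_s10

variable {Γ Δ : List Form} {A B C D : Form}

theorem trans (h : ND_s10 Γ C) (hΓ : ∀ G ∈ Γ, ND_s10 Δ G) : ND_s10 Δ C := by
  induction h with
  | hyp h => exact hΓ _ h
  | ax h => exact .ax h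
  | mp _ _ ih₁ ih₂ => exact .mp ih₁ ih₂

theorem forall_of_subset (h : Γ ⊆ Δ) : ∀ G ∈ Γ, ND_s10 Δ G := fun _ hG => .hyp (h hG)

theorem weaken (h : ND_s10 Γ C) (hs : Γ ⊆ Δ) : ND_s10 Δ C := h.trans (forall_of_subset hs)

theorem cut (hA : ND_s10 Γ A) (h : ND_s10 [A] B) : ND_s10 Γ B := h.trans (by simp [hA])

theorem head : ND_s10 (A :: Γ) A := .hyp List.mem_cons_self
theorem hyp₁ : ND_s10 (B :: A :: Γ) A := .hyp (by simp)
theorem hyp₂ : ND_s10 (C :: B :: A :: Γ) A := .hyp (by simp)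
theorem hyp₃ : ND_s10 (D :: C :: B :: A :: Γ) A := .hyp (by simp)

theorem imp_self : ND_s10 Γ (.imp A A) :=
  ((ND_s10.ax (.a2 A (.imp A A) A)).mp (.ax (.a1 A (.imp A A)))).mp (.ax (.a1 A A))

theorem deduction (h : ND_s10 (A :: Γ) B) : ND_s10 Γ (.imp A B) := by
  generalize hΔ : A :: Γ = Δ at h
  induction h with
  | hyp h =>
    subst hΔ
    rcases List.mem_cons.mp h with rfl | h
    · exact imp_self
    · exact (ND_s10.ax (.a1 _ A)).mp (.hyp h)
  | ax h => exact (ND_s10.ax (.a1 _ A)).mp (.ax h)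
  | mp _ _ ih₁ ih₂ => exact ((ND_s10.ax (.a2 A _ _)).mp ih₁).mp ih₂

theorem andI (hA : ND_s10 Γ A) (hB : ND_s10 Γ B) : ND_s10 Γ (.and A B) := ((ND_s10.ax (.a3 A B)).mp hA).mp hB
theorem andL (h : ND_s10 Γ (.and A B)) : ND_s10 Γ A := (ND_s10.ax (.a4 A B)).mp h
theorem andR (h : ND_s10 Γ (.and A B)) : ND_s10 Γ B := (ND_s10.ax (.a5 A B)).mp h
theorem orIL (h : ND_s10 Γ A) : ND_s10 Γ (.or A B) := (ND_s10.ax (.a6 A B)).mp h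
theorem orIR (h : ND_s10 Γ B) : ND_s10 Γ (.or A B) := (ND_s10.ax (.a7 A B)).mp h
theorem orE (h : ND_s10 Γ (.or A B)) (hA : ND_s10 (A :: Γ) C) (hB : ND_s10 (B :: Γ) C) : ND_s10 Γ C :=
  (((ND_s10.ax (.a8 A B C)).mp hA.deduction).mp hB.deduction).mp h
theorem efq (h : ND_s10 Γ .bot) : ND_s10 Γ A := (ND_s10.ax (.a9 A)).mp h

theorem iffI (h₁ : ND_s10 (A :: Γ) B) (h₂ : ND_s10 (B :: Γ) A) : ND_s10 Γ (iffF A B) :=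
  andI h₁.deduction h₂.deduction
theorem iff_mp (h : ND_s10 Γ (iffF A B)) (hA : ND_s10 Γ A) : ND_s10 Γ B := h.andL.mp hA
theorem iff_mpr (h : ND_s10 Γ (iffF A B)) (hB : ND_s10 Γ B) : ND_s10 Γ A := h.andR.mp hB

theorem listConj_intro : ∀ {L : List Form}, (∀ G ∈ L, ND_s10 Γ G) → ND_s10 Γ (listConj L)
  | [], _ => imp_self
  | [_], h => h _ List.mem_cons_self
  | _ :: _ :: _, h => andI (h _ List.mem_cons_self) (listConj_intro fun G hG => h G (.tail _ hG))

theorem of_mem_listConj : ∀ {L : List Form}, ND_s10 Γ (listConj L) → ∀ G ∈ L, ND_s10 Γ G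
  | [_], h, _, hG => by rw [List.mem_singleton.mp hG]; exact h
  | _ :: _ :: _, h, G, hG => by
    rcases List.mem_cons.mp hG with rfl | hG
    · exact andL h
    · exact of_mem_listConj (andR h) G hG

theorem listDisj_intro : ∀ {L : List Form} {G : Form}, G ∈ L → ND_s10 Γ G → ND_s10 Γ (listDisj L)
  | [_], _, hG, h => by rw [← List.mem_singleton.mp hG]; exact h
  | _ :: _ :: _, _, hG, h => by
    rcases List.mem_cons.mp hG with rfl | hG
    · exact orIL h
    · exact orIR (listDisj_intro hG h)

theorem listDisj_elim : ∀ {Γ : List Form} {L : List Form}, ND_s10 Γ (listDisj L) →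
    (∀ G ∈ L, ND_s10 (G :: Γ) C) → ND_s10 Γ C
  | _, [], h, _ => efq h
  | _, [_], h, hL => (hL _ List.mem_cons_self).deduction.mp h
  | _, _ :: _ :: _, h, hL =>
    orE h (hL _ List.mem_cons_self) <| listDisj_elim head fun G hG =>
      (hL G (.tail _ hG)).weaken (List.cons_subset_cons _ (List.subset_cons_self _ _))

theorem of_ipcb (h : IPCbProves A) : ND_s10 Γ A := by
  induction h with
  | ax h => exact h.elim
  | ipc h => exact .ax h
  | mp _ _ ih₁ ih₂ => exact .mp ih₁ ih₂
  | nec hb => exact absurd hb Bool.false_ne_true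

end ND_s10

section Proves

variable {Ax : Form → Prop} {b : Bool} {A B : Form}

theorem Proves.of_nd {Γ : List Form} (h : ND_s10 Γ A) (hΓ : ∀ G ∈ Γ, Proves Ax b G) :
    Proves Ax b A := by
  induction h with
  | hyp h => exact hΓ _ h
  | ax h => exact .ipc h
  | mp _ _ ih₁ ih₂ => exact .mp ih₁ ih₂

theorem Proves.of_nd₂ {P Q : Form} (h : ND_s10 [P, Q] A) (hP : Proves Ax b P) (hQ : Proves Ax b Q) :
    Proves Ax b A :=
  Proves.of_nd h (by simp [hP, hQ])

theorem Proves.of_ipcb (h : IPCbProves A) : Proves Ax b A :=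
  Proves.of_nd (ND_s10.of_ipcb (Γ := []) h) (by simp)

theorem Proves.substF (f : ℕ → Form) (hAx : ∀ {A}, Ax A → Ax (PLHA.substF f A))
    (h : Proves Ax b A) : Proves Ax b (PLHA.substF f A) := by
  induction h with
  | ax h => exact .ax (hAx h)
  | ipc h => exact .ipc (by cases h <;> constructor)
  | mp _ _ ih₁ ih₂ => exact .mp ih₁ ih₂
  | nec hb _ ih => exact .nec hb ih

theorem ipcb_imp_iff_nd : IPCbProves (.imp A B) ↔ ND_s10 [A] B :=
  ⟨fun h => (ND_s10.of_ipcb h).mp ND_s10.head, fun h => Proves.of_nd h.deduction (by simp)⟩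

end Proves

namespace HsigmaProves

variable {A A' B B' : Form}

theorem box_mono (h : HsigmaProves (.imp A B)) : HsigmaProves (.imp (.box A) (.box B)) :=
  (Proves.ax (Or.inl (.k A B))).mp (.nec rfl h)

theorem imp_trans (h₁ : HsigmaProves (.imp A B)) (h₂ : HsigmaProves (.imp B B')) :
    HsigmaProves (.imp A B') :=
  Proves.of_nd₂ (ND_s10.deduction <| ND_s10.hyp₂.mp <| ND_s10.hyp₁.mp ND_s10.head) h₁ h₂

theorem iff_intro (h₁ : HsigmaProves (.imp A B)) (h₂ : HsigmaProves (.imp B A)) :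
    HsigmaProves (iffF A B) :=
  Proves.of_nd₂ (ND_s10.andI ND_s10.head ND_s10.hyp₁) h₁ h₂

theorem iff_mp (h : HsigmaProves (iffF A B)) : HsigmaProves (.imp A B) :=
  (Proves.ipc (.a4 _ _)).mp h

theorem iff_mpr (h : HsigmaProves (iffF A B)) : HsigmaProves (.imp B A) :=
  (Proves.ipc (.a5 _ _)).mp h

theorem iff_refl : HsigmaProves (iffF A A) :=
  Proves.of_nd (ND_s10.iffI (Γ := []) ND_s10.head ND_s10.head) (by simp)

theorem box_congr (h : HsigmaProves (iffF A B)) : HsigmaProves (iffF (.box A) (.box B)) :=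
  iff_intro h.iff_mp.box_mono h.iff_mpr.box_mono

theorem and_congr (hA : HsigmaProves (iffF A A')) (hB : HsigmaProves (iffF B B')) :
    HsigmaProves (iffF (.and A B) (.and A' B')) :=
  Proves.of_nd₂ (ND_s10.iffI (ND_s10.andI (ND_s10.hyp₁.iff_mp ND_s10.head.andL) (ND_s10.hyp₂.iff_mp ND_s10.head.andR))
    (ND_s10.andI (ND_s10.hyp₁.iff_mpr ND_s10.head.andL) (ND_s10.hyp₂.iff_mpr ND_s10.head.andR))) hA hB

theorem or_congr (hA : HsigmaProves (iffF A A')) (hB : HsigmaProves (iffF B B')) :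
    HsigmaProves (iffF (.or A B) (.or A' B')) :=
  Proves.of_nd₂ (ND_s10.iffI
    (ND_s10.head.orE (ND_s10.hyp₂.iff_mp ND_s10.head).orIL (ND_s10.hyp₃.iff_mp ND_s10.head).orIR)
    (ND_s10.head.orE (ND_s10.hyp₂.iff_mpr ND_s10.head).orIL (ND_s10.hyp₃.iff_mpr ND_s10.head).orIR)) hA hB

theorem imp_congr (hA : HsigmaProves (iffF A A')) (hB : HsigmaProves (iffF B B')) :
    HsigmaProves (iffF (.imp A B) (.imp A' B')) :=
  Proves.of_nd₂ (ND_s10.iffI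
    (ND_s10.deduction <| ND_s10.hyp₃.iff_mp <| ND_s10.hyp₁.mp <| ND_s10.hyp₂.iff_mpr ND_s10.head)
    (ND_s10.deduction <| ND_s10.hyp₃.iff_mpr <| ND_s10.hyp₁.mp <| ND_s10.hyp₂.iff_mp ND_s10.head)) hA hB

theorem substF_congr {f g : ℕ → Form} (h : ∀ n, HsigmaProves (iffF (f n) (g n))) :
    ∀ F : Form, HsigmaProves (iffF (substF f F) (substF g F))
  | .var n => h n
  | .bot => iff_refl
  | .and A B => and_congr (substF_congr h A) (substF_congr h B)
  | .or A B => or_congr (substF_congr h A) (substF_congr h B)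
  | .imp A B => imp_congr (substF_congr h A) (substF_congr h B)
  | .box A => box_congr (substF_congr h A)

end HsigmaProves

def AtomBoxedSubst (f : ℕ → Form) : Prop := ∀ n, (f n).isAtom ∨ (f n).isBoxed

theorem substF_listConj (f : ℕ → Form) :
    ∀ L : List Form, substF f (listConj L) = listConj (L.map (substF f))
  | [] | [_] => rfl
  | _ :: B :: L => congrArg (Form.and _) (substF_listConj f (B :: L))

theorem substF_listDisj (f : ℕ → Form) :
    ∀ L : List Form, substF f (listDisj L) = listDisj (L.map (substF f))
  | [] | [_] => rfl
  | _ :: B :: L => congrArg (Form.or _) (substF_listDisj f (B :: L))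

theorem substF_bracket {f : ℕ → Form} (hf : AtomBoxedSubst f) (A : Form) :
    ∀ B : Form, substF f (bracket A B) = bracket (substF f A) (substF f B)
  | .var n => by
    rcases hf n with (⟨m, h⟩ | h) | ⟨B', h⟩ <;> simp [substF, bracket, h]
  | .bot | .box _ | .imp _ _ => rfl
  | .and B C => by simp [substF, bracket, substF_bracket hf A B, substF_bracket hf A C]
  | .or B C => by simp [substF, bracket, substF_bracket hf A B, substF_bracket hf A C]

namespace Pres

variable {A B : Form}

theorem of_nd (h : ND_s10 [A] B) : Pres A B := .a1 (Proves.of_nd h.deduction (by simp))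

theorem refl : Pres A A := .of_nd ND_s10.head

theorem of_ipcb (h : IPCbProves (.imp A B)) : Pres A B := .of_nd (ipcb_imp_iff_nd.1 h)

theorem substF {f : ℕ → Form} (hf : AtomBoxedSubst f) (h : Pres A B) :
    Pres (PLHA.substF f A) (PLHA.substF f B) := by
  induction h with
  | a1 h => exact .a1 (h.substF f fun h => by cases h <;> constructor)
  | a2 _ _ ih₁ ih₂ => exact .a2 ih₁ ih₂
  | a3 _ _ ih₁ ih₂ => exact .a3 ih₁ ih₂
  | a4 _ ih => exact .a4 ih
  | b1 _ _ ih₁ ih₂ => exact .b1 ih₁ ih₂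
  | b2 X C =>
    convert Pres.b2 (X.map (Prod.map (PLHA.substF f) (PLHA.substF f))) (PLHA.substF f C) using 1
    · simp [PLHA.substF, substF_listConj, List.map_map, Function.comp_def]
    · simp [PLHA.substF, substF_listDisj, substF_listConj, substF_bracket hf, List.map_map,
        Function.comp_def]
  | b3 _ hC ih =>
    refine .b3 ih ?_
    rcases hC with (⟨n, rfl⟩ | rfl) | ⟨B, rfl⟩
    · exact hf n
    · exact Or.inl (Or.inr rfl)
    · exact Or.inr ⟨_, rfl⟩

end Pres

section Approx

variable {A A' A₁ A₂ Z Z' Z₁ Z₂ G : Form}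

theorem rho_eq_zero_of_atom_or_boxed (h : G.isAtom ∨ G.isBoxed) : G.rho = 0 := by
  rcases h with (⟨n, rfl⟩ | rfl) | ⟨B, rfl⟩ <;> rfl

theorem NNILc.and (h₁ : NNILc A₁) (h₂ : NNILc A₂) : NNILc (.and A₁ A₂) := max_le h₁ h₂

theorem NNILc.or (h₁ : NNILc A₁) (h₂ : NNILc A₂) : NNILc (.or A₁ A₂) := max_le h₁ h₂

theorem NNILc.imp_of_atom_or_boxed (hG : G.isAtom ∨ G.isBoxed) (h : NNILc A) :
    NNILc (.imp G A) := by
  simp only [NNILc, rho, rho_eq_zero_of_atom_or_boxed hG]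
  exact max_le le_rfl h

def PresApprox (A Z : Form) : Prop := ∃ H, NNILc H ∧ IPCbProves (.imp H A) ∧ Pres Z H

namespace PresApprox

theorem mono (hA : ND_s10 [A] A') (hZ : Pres Z' Z) : PresApprox A Z → PresApprox A' Z'
  | ⟨H, hH, hHA, hZH⟩ =>
    ⟨H, hH, ipcb_imp_iff_nd.2 (hA.trans (by simpa using ipcb_imp_iff_nd.1 hHA)), .a2 hZ hZH⟩

theorem of_equiv (h₁ : ND_s10 [A] A') (h₂ : ND_s10 [A'] A) (h : PresApprox A' A') : PresApprox A A :=
  h.mono h₂ (.of_nd h₁)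

theorem of_atom_or_boxed (hG : G.isAtom ∨ G.isBoxed) (hGA : ND_s10 [G] A) (hZ : Pres Z G) :
    PresApprox A Z :=
  ⟨G, by simp [NNILc, rho_eq_zero_of_atom_or_boxed hG], ipcb_imp_iff_nd.2 hGA, hZ⟩

theorem and : PresApprox A₁ Z₁ → PresApprox A₂ Z₂ → PresApprox (.and A₁ A₂) (.and Z₁ Z₂)
  | ⟨H₁, hH₁, hHA₁, hZH₁⟩, ⟨H₂, hH₂, hHA₂, hZH₂⟩ =>
    ⟨.and H₁ H₂, hH₁.and hH₂,
      ipcb_imp_iff_nd.2 (ND_s10.andI (ND_s10.of_ipcb hHA₁ |>.mp ND_s10.head.andL)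
        (ND_s10.of_ipcb hHA₂ |>.mp ND_s10.head.andR)),
      .a3 (.a2 (.of_nd ND_s10.head.andL) hZH₁) (.a2 (.of_nd ND_s10.head.andR) hZH₂)⟩

theorem or : PresApprox A₁ Z₁ → PresApprox A₂ Z₂ → PresApprox (.or A₁ A₂) (.or Z₁ Z₂)
  | ⟨H₁, hH₁, hHA₁, hZH₁⟩, ⟨H₂, hH₂, hHA₂, hZH₂⟩ =>
    ⟨.or H₁ H₂, hH₁.or hH₂,
      ipcb_imp_iff_nd.2 (ND_s10.head.orE (ND_s10.of_ipcb hHA₁ |>.mp ND_s10.head).orIL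
        (ND_s10.of_ipcb hHA₂ |>.mp ND_s10.head).orIR),
      .b1 (.a2 hZH₁ (.of_nd ND_s10.head.orIL)) (.a2 hZH₂ (.of_nd ND_s10.head.orIR))⟩

theorem imp_atom_or_boxed (hG : G.isAtom ∨ G.isBoxed) :
    PresApprox A Z → PresApprox (.imp G A) (.imp G Z)
  | ⟨H, hH, hHA, hZH⟩ =>
    ⟨.imp G H, hH.imp_of_atom_or_boxed hG,
      ipcb_imp_iff_nd.2 (ND_s10.deduction (ND_s10.of_ipcb hHA |>.mp (ND_s10.hyp₁.mp ND_s10.head))),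
      .b3 hZH hG⟩

theorem listDisj {L : List Form} (h : ∀ Z ∈ L, PresApprox A Z) : PresApprox A (listDisj L) := by
  induction L with
  | nil => exact of_atom_or_boxed (Or.inl (Or.inr rfl)) ND_s10.head.efq .refl
  | cons Z L ih =>
    cases L with
    | nil => exact h Z List.mem_cons_self
    | cons Z' L =>
      exact ((h Z List.mem_cons_self).or (ih fun Z hZ => h Z (.tail _ hZ))).mono
        (ND_s10.head.orE ND_s10.head ND_s10.head) .refl

end PresApprox

end Approx

def seqImp (Γ : List Form) (C : Form) : Form := .imp (listConj Γ) C

abbrev SeqApprox (Γ : List Form) (C : Form) : Prop := PresApprox (seqImp Γ C) (seqImp Γ C)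

section Sequents

variable {Γ Γ' Δ : List Form} {C C₁ C₂ G G₁ G₂ E₁ E₂ F : Form}

theorem ND_s10.seqImp_intro (h : ND_s10 (Γ ++ Δ) C) : ND_s10 Δ (seqImp Γ C) :=
  ND_s10.deduction <| h.trans fun G hG => by
    rcases List.mem_append.mp hG with hG | hG
    · exact ND_s10.of_mem_listConj ND_s10.head G hG
    · exact .hyp (.tail _ hG)

theorem ND_s10.seqImp_elim (h : ND_s10 Δ (seqImp Γ C)) (hΓ : ∀ G ∈ Γ, ND_s10 Δ G) : ND_s10 Δ C :=
  h.mp (ND_s10.listConj_intro hΓ)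

theorem ND_s10.seqImp_of_ctx (h : ∀ G ∈ Γ, ND_s10 Γ' G) : ND_s10 [seqImp Γ C] (seqImp Γ' C) :=
  ND_s10.seqImp_intro <| ND_s10.seqImp_elim (.hyp (by simp)) fun G hG =>
    (h G hG).weaken (List.subset_append_left _ _)

theorem SeqApprox.of_ctx (h₁ : ∀ G ∈ Γ, ND_s10 Γ' G) (h₂ : ∀ G ∈ Γ', ND_s10 Γ G)
    (h : SeqApprox Γ' C) : SeqApprox Γ C :=
  h.of_equiv (ND_s10.seqImp_of_ctx h₁) (ND_s10.seqImp_of_ctx h₂)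

theorem SeqApprox.of_perm (hΓ : Γ.Perm Γ') (h : SeqApprox Γ' C) : SeqApprox Γ C :=
  h.of_ctx (ND_s10.forall_of_subset hΓ.subset) (ND_s10.forall_of_subset hΓ.symm.subset)

theorem SeqApprox.of_prefix {Γ₁ Γ₂ : List Form} (h₁ : ∀ G ∈ Γ₁, ND_s10 (Γ₂ ++ Γ) G)
    (h₂ : ∀ G ∈ Γ₂, ND_s10 (Γ₁ ++ Γ) G) (h : SeqApprox (Γ₂ ++ Γ) C) : SeqApprox (Γ₁ ++ Γ) C := by
  refine h.of_ctx (fun G hG => ?_) (fun G hG => ?_) <;> rcases List.mem_append.mp hG with hG | hG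
  · exact h₁ G hG
  · exact .hyp (by simp [hG])
  · exact h₂ G hG
  · exact .hyp (by simp [hG])

theorem SeqApprox.cons_and (h : SeqApprox (G₁ :: G₂ :: Γ) C) : SeqApprox (.and G₁ G₂ :: Γ) C :=
  of_prefix (Γ₁ := [_]) (Γ₂ := [_, _]) (by simpa using ND_s10.andI ND_s10.head ND_s10.hyp₁)
    (by simpa using ⟨ND_s10.head.andL, ND_s10.head.andR⟩) h

theorem SeqApprox.cons_imp_and (h : SeqApprox (.imp E₁ (.imp E₂ F) :: Γ) C) :
    SeqApprox (.imp (.and E₁ E₂) F :: Γ) C :=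
  of_prefix (Γ₁ := [_]) (Γ₂ := [_])
    (by simpa using ND_s10.deduction ((ND_s10.hyp₁.mp ND_s10.head.andL).mp ND_s10.head.andR))
    (by simpa using ND_s10.deduction (ND_s10.deduction (ND_s10.hyp₂.mp (ND_s10.andI ND_s10.hyp₁ ND_s10.head)))) h

theorem SeqApprox.cons_imp_or (h : SeqApprox (.imp E₁ F :: .imp E₂ F :: Γ) C) :
    SeqApprox (.imp (.or E₁ E₂) F :: Γ) C :=
  of_prefix (Γ₁ := [_]) (Γ₂ := [_, _])
    (by simpa using ND_s10.deduction (ND_s10.head.orE (ND_s10.hyp₂.mp ND_s10.head) (ND_s10.hyp₃.mp ND_s10.head)))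
    (by simpa using
      ⟨ND_s10.deduction (ND_s10.hyp₁.mp ND_s10.head.orIL), ND_s10.deduction (ND_s10.hyp₁.mp ND_s10.head.orIR)⟩) h

theorem SeqApprox.cons_of_atom_or_boxed (hG : G.isAtom ∨ G.isBoxed) (h : SeqApprox Γ C) :
    SeqApprox (G :: Γ) C :=
  (h.imp_atom_or_boxed hG).of_equiv
    (ND_s10.deduction <| ND_s10.seqImp_intro <| ND_s10.seqImp_elim (Γ := G :: Γ) (.hyp (by simp))
      (ND_s10.forall_of_subset fun _ hG => by simp at hG ⊢; tauto))
    (ND_s10.seqImp_intro <| ND_s10.seqImp_elim (Γ := Γ)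
      ((ND_s10.hyp (A := .imp G (seqImp Γ C)) (by simp)).mp (.hyp (by simp)))
      (ND_s10.forall_of_subset fun _ hG => by simp [hG]))

theorem SeqApprox.cons_or (h₁ : SeqApprox (G₁ :: Γ) C) (h₂ : SeqApprox (G₂ :: Γ) C) :
    SeqApprox (.or G₁ G₂ :: Γ) C :=
  (h₁.and h₂).of_equiv
    (ND_s10.andI
      (ND_s10.seqImp_of_ctx (List.forall_mem_cons.2 ⟨ND_s10.head.orIL, ND_s10.forall_of_subset (by simp)⟩))
      (ND_s10.seqImp_of_ctx (List.forall_mem_cons.2 ⟨ND_s10.head.orIR, ND_s10.forall_of_subset (by simp)⟩)))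
    (ND_s10.seqImp_intro <| ND_s10.orE ND_s10.head
      (ND_s10.seqImp_elim (Γ := G₁ :: Γ)
        (ND_s10.hyp (A := .and (seqImp (G₁ :: Γ) C) (seqImp (G₂ :: Γ) C)) (by simp)).andL
        (ND_s10.forall_of_subset fun _ hG => by simp at hG ⊢; tauto))
      (ND_s10.seqImp_elim (Γ := G₂ :: Γ)
        (ND_s10.hyp (A := .and (seqImp (G₁ :: Γ) C) (seqImp (G₂ :: Γ) C)) (by simp)).andR
        (ND_s10.forall_of_subset fun _ hG => by simp at hG ⊢; tauto)))

theorem SeqApprox.and (h₁ : SeqApprox Γ C₁) (h₂ : SeqApprox Γ C₂) : SeqApprox Γ (.and C₁ C₂) :=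
  (PresApprox.and h₁ h₂).of_equiv
    (ND_s10.andI (ND_s10.deduction (ND_s10.hyp₁.mp ND_s10.head).andL) (ND_s10.deduction (ND_s10.hyp₁.mp ND_s10.head).andR))
    (ND_s10.deduction (ND_s10.andI (ND_s10.hyp₁.andL.mp ND_s10.head) (ND_s10.hyp₁.andR.mp ND_s10.head)))

theorem SeqApprox.imp (h : SeqApprox (C₁ :: Γ) C₂) : SeqApprox Γ (.imp C₁ C₂) :=
  h.of_equiv
    (ND_s10.seqImp_intro <| (ND_s10.seqImp_elim (Γ := Γ) (ND_s10.hyp (A := seqImp Γ (.imp C₁ C₂)) (by simp))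
      (ND_s10.forall_of_subset fun _ hG => by simp [hG])).mp (.hyp (by simp)))
    (ND_s10.seqImp_intro <| ND_s10.deduction <| ND_s10.seqImp_elim (Γ := C₁ :: Γ)
      (ND_s10.hyp (A := seqImp (C₁ :: Γ) C₂) (by simp))
      (ND_s10.forall_of_subset fun _ hG => by simp at hG ⊢; tauto))

end Sequents

/-- Conjunction weighs one more than the other connectives so that currying `(E₁ ∧ E₂) → F` to
`E₁ → (E₂ → F)` lowers the weight. -/
def wt : Form → ℕ
  | .and A B => wt A + wt B + 2
  | .or A B | .imp A B => wt A + wt B + 1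
  | _ => 1

theorem one_le_wt (A : Form) : 1 ≤ wt A := by
  cases A <;> simp [wt]

/-- Base `4` makes replacing one formula by up to three strictly lighter ones a decrease. -/
def seqWeight (Γ : List Form) (C : Form) : ℕ := (Γ.map fun G => 4 ^ wt G).sum + 4 ^ wt C

@[simp] theorem seqWeight_cons (G : Form) (Γ : List Form) (C : Form) :
    seqWeight (G :: Γ) C = 4 ^ wt G + seqWeight Γ C := by
  simp [seqWeight, add_assoc]

theorem seqWeight_perm {Γ Γ' : List Form} (C : Form) (h : Γ.Perm Γ') :
    seqWeight Γ C = seqWeight Γ' C := by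
  simp [seqWeight, (h.map _).sum_eq]

theorem four_pow_add_add_lt {a b c r : ℕ} (ha : a < r) (hb : b < r) (hc : c < r) :
    4 ^ a + 4 ^ b + 4 ^ c < 4 ^ r := by
  obtain ⟨s, rfl⟩ : ∃ s, r = s + 1 := ⟨r - 1, by omega⟩
  have := Nat.pow_le_pow_right (n := 4) (by norm_num) (Nat.le_of_lt_succ ha)
  have := Nat.pow_le_pow_right (n := 4) (by norm_num) (Nat.le_of_lt_succ hb)
  have := Nat.pow_le_pow_right (n := 4) (by norm_num) (Nat.le_of_lt_succ hc)
  have : 0 < 4 ^ s := by positivity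
  rw [pow_succ]
  omega

theorem four_pow_add_lt {a b r : ℕ} (ha : a < r) (hb : b < r) : 4 ^ a + 4 ^ b < 4 ^ r :=
  lt_of_le_of_lt (Nat.le_add_right _ _) (four_pow_add_add_lt ha hb hb)

theorem four_pow_lt {a r : ℕ} (ha : a < r) : 4 ^ a < 4 ^ r :=
  Nat.pow_lt_pow_right (by norm_num) ha

def ApproxBelow (n : ℕ) : Prop := ∀ Γ C, seqWeight Γ C < n → SeqApprox Γ C

/-- The members of the context to which rule B2 is applied without decomposing them further. -/
def IsReducedImp : Form → Prop
  | .imp (.and _ _) _ | .imp (.or _ _) _ => False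
  | .imp _ _ => True
  | _ => False

section Reduced

variable {Γ Γ₀ : List Form} {C D D' E F Z : Form}

theorem PresApprox.imp_bracket (B : Form) : ∀ C : Form,
    (∀ D₁ D₂, wt (.imp D₁ D₂) ≤ wt C →
      PresApprox (.imp B (.imp D₁ D₂)) (.imp B (.imp D₁ D₂))) →
    PresApprox (.imp B C) (bracket B C)
  | .var n, _ => of_atom_or_boxed (Or.inl (Or.inl ⟨n, rfl⟩)) (ND_s10.deduction ND_s10.hyp₁) .refl
  | .bot, _ => of_atom_or_boxed (Or.inl (Or.inr rfl)) (ND_s10.deduction ND_s10.hyp₁) .refl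
  | .box D, _ => of_atom_or_boxed (Or.inr ⟨D, rfl⟩) (ND_s10.deduction ND_s10.hyp₁) .refl
  | .imp D₁ D₂, h => h D₁ D₂ le_rfl
  | .and C₁ C₂, h =>
    ((imp_bracket B C₁ fun D₁ D₂ hD => h D₁ D₂ (by simp only [wt] at *; omega)).and
      (imp_bracket B C₂ fun D₁ D₂ hD => h D₁ D₂ (by simp only [wt] at *; omega))).mono
      (ND_s10.deduction (ND_s10.andI (ND_s10.hyp₁.andL.mp ND_s10.head) (ND_s10.hyp₁.andR.mp ND_s10.head))) .refl
  | .or C₁ C₂, h =>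
    ((imp_bracket B C₁ fun D₁ D₂ hD => h D₁ D₂ (by simp only [wt] at *; omega)).or
      (imp_bracket B C₂ fun D₁ D₂ hD => h D₁ D₂ (by simp only [wt] at *; omega))).mono
      (ND_s10.deduction (ND_s10.hyp₁.orE (ND_s10.head.mp ND_s10.hyp₁).orIL (ND_s10.head.mp ND_s10.hyp₁).orIR)) .refl

/-- In the disjunct of rule B2 coming from `E → F ∈ Γ`, an approximation of `E` under `Γ` is
completed by one of the lighter sequent `F, Γ \ {E → F} ⇒ C`. -/
theorem PresApprox.seqImp_of_antecedent (hΓ : Γ.Perm (.imp E F :: Γ₀))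
    (hF : SeqApprox (F :: Γ₀) C) (hE : PresApprox (.imp (listConj Γ) E) (.and (seqImp Γ C) Z)) :
    PresApprox (seqImp Γ C) (.and (seqImp Γ C) Z) := by
  refine (hE.and hF).mono (ND_s10.seqImp_intro ?_)
    (.of_nd (ND_s10.andI ND_s10.head (ND_s10.head.andL.cut (ND_s10.seqImp_of_ctx fun G hG => ?_))))
  · set P := Form.and (.imp (listConj Γ) E) (seqImp (F :: Γ₀) C)
    have hΓ' : ∀ G ∈ Γ, ND_s10 (Γ ++ [P]) G := ND_s10.forall_of_subset (by simp)
    have hE : ND_s10 (Γ ++ [P]) E := (ND_s10.hyp (A := P) (by simp)).andL.mp (ND_s10.listConj_intro hΓ')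
    refine ND_s10.seqImp_elim (ND_s10.hyp (A := P) (by simp)).andR
      (List.forall_mem_cons.2 ⟨(hΓ' _ (hΓ.symm.subset (by simp))).mp hE, fun G hG => hΓ' G ?_⟩)
    exact hΓ.symm.subset (.tail _ hG)
  · rcases List.mem_cons.mp (hΓ.subset hG) with rfl | hG
    · exact ND_s10.deduction ND_s10.hyp₁
    · exact .hyp (.tail _ hG)

theorem PresApprox.imp_antecedent_of_perm (hΓ : Γ.Perm (.imp (.imp D D') F :: Γ₀))
    (h : SeqApprox (D :: .imp D' F :: Γ₀) D') :
    PresApprox (.imp (listConj Γ) (.imp D D'))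
      (.and (seqImp Γ C) (.imp (listConj Γ) (.imp D D'))) := by
  have hmem : Form.imp (.imp D D') F ∈ Γ := hΓ.symm.subset List.mem_cons_self
  refine h.mono (ND_s10.deduction (ND_s10.deduction (ND_s10.seqImp_elim ND_s10.hyp₂ ?_)))
    (.of_nd (ND_s10.head.andR.cut (ND_s10.seqImp_intro ?_)))
  · have hΓ' : ∀ G ∈ Γ, ND_s10 [D, listConj Γ, seqImp (D :: .imp D' F :: Γ₀) D'] G :=
      ND_s10.of_mem_listConj ND_s10.hyp₁
    refine List.forall_mem_cons.2 ⟨ND_s10.head, List.forall_mem_cons.2 ⟨?_, fun G hG =>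
      hΓ' G (hΓ.symm.subset (.tail _ hG))⟩⟩
    exact ND_s10.deduction (((hΓ' _ hmem).weaken (by simp)).mp (ND_s10.deduction ND_s10.hyp₁))
  · refine ((ND_s10.hyp (A := .imp (listConj Γ) (.imp D D')) (by simp)).mp
      (ND_s10.listConj_intro fun G hG => ?_)).mp ND_s10.head
    rcases List.mem_cons.mp (hΓ.subset hG) with rfl | hG
    · exact ND_s10.deduction (ND_s10.hyp₂.mp (ND_s10.head.mp ND_s10.hyp₁))
    · exact .hyp (by simp [hG])

theorem PresApprox.and_bracket_of_mem (ih : ApproxBelow (seqWeight Γ C)) (hm : .imp E F ∈ Γ)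
    (hE : IsReducedImp (.imp E F)) :
    PresApprox (seqImp Γ C) (.and (seqImp Γ C) (bracket (listConj Γ) E)) := by
  have hΓ := List.perm_cons_erase hm
  have hw := seqWeight_perm C hΓ
  have hF : SeqApprox (F :: Γ.erase (.imp E F)) C := by
    refine ih _ _ ?_
    have := four_pow_lt (show wt F < wt (.imp E F) by simp only [wt]; have := one_le_wt E; omega)
    simp only [seqWeight_cons] at hw ⊢
    omega
  refine seqImp_of_antecedent hΓ hF ?_
  match E, hE with
  | .var n, _ =>
    exact of_atom_or_boxed (Or.inl (Or.inl ⟨n, rfl⟩)) (ND_s10.deduction ND_s10.hyp₁) (.of_nd ND_s10.head.andR)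
  | .bot, _ =>
    exact of_atom_or_boxed (Or.inl (Or.inr rfl)) (ND_s10.deduction ND_s10.hyp₁) (.of_nd ND_s10.head.andR)
  | .box D, _ =>
    exact of_atom_or_boxed (Or.inr ⟨D, rfl⟩) (ND_s10.deduction ND_s10.hyp₁) (.of_nd ND_s10.head.andR)
  | .imp D D', _ =>
    refine imp_antecedent_of_perm hΓ (ih _ _ ?_)
    have := four_pow_add_add_lt (r := wt (.imp (.imp D D') F)) (a := wt D) (b := wt (.imp D' F))
      (c := wt D') (by simp only [wt]; omega) (by simp only [wt]; have := one_le_wt D; omega)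
      (by simp only [wt]; omega)
    have : 0 < 4 ^ wt C := by positivity
    simp only [seqWeight, List.map_cons, List.sum_cons] at hw ⊢
    omega

theorem SeqApprox.of_b2 {X : List (Form × Form)}
    (h : ∀ Z ∈ (X.map Prod.fst ++ [C]).map (bracket (listConj (X.map fun p => .imp p.1 p.2))),
      PresApprox (seqImp (X.map fun p => .imp p.1 p.2) C)
        (.and (seqImp (X.map fun p => .imp p.1 p.2) C) Z)) :
    SeqApprox (X.map fun p => .imp p.1 p.2) C := by
  set A := seqImp (X.map fun p => .imp p.1 p.2) C
  set L := (X.map Prod.fst ++ [C]).map (bracket (listConj (X.map fun p => .imp p.1 p.2)))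
  have hA : Pres A (listDisj (L.map (.and A))) :=
    .a2 (.a3 .refl (Pres.b2 X C)) <| .of_nd <| ND_s10.listDisj_elim ND_s10.head.andR fun Z hZ =>
      ND_s10.listDisj_intro (List.mem_map_of_mem hZ) (ND_s10.andI ND_s10.hyp₁.andL ND_s10.head)
  refine (PresApprox.listDisj fun Z' hZ' => ?_).mono ND_s10.head hA
  obtain ⟨Z, hZ, rfl⟩ := List.mem_map.mp hZ'
  exact h Z hZ

theorem exists_map_imp_eq (h : ∀ G ∈ Γ, ∃ E F, G = .imp E F) :
    ∃ X : List (Form × Form), X.map (fun p => .imp p.1 p.2) = Γ := by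
  induction Γ with
  | nil => exact ⟨[], rfl⟩
  | cons G Γ ih =>
    obtain ⟨E, F, rfl⟩ := h G List.mem_cons_self
    obtain ⟨X, rfl⟩ := ih fun G hG => h G (.tail _ hG)
    exact ⟨(E, F) :: X, rfl⟩

theorem SeqApprox.of_bracket_consequent (hΓ : ∀ G ∈ Γ, IsReducedImp G)
    (ih : ApproxBelow (seqWeight Γ C))
    (hC : PresApprox (seqImp Γ C) (.and (seqImp Γ C) (bracket (listConj Γ) C))) :
    SeqApprox Γ C := by
  obtain ⟨X, rfl⟩ := exists_map_imp_eq fun G hG => by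
    match G, hΓ G hG with
    | .imp E F, _ => exact ⟨E, F, rfl⟩
  refine of_b2 fun Z hZ => ?_
  obtain ⟨Y, hY, rfl⟩ := List.mem_map.mp hZ
  rcases List.mem_append.mp hY with hY | hY
  · obtain ⟨p, hp, rfl⟩ := List.mem_map.mp hY
    have hm : Form.imp p.1 p.2 ∈ X.map fun p => Form.imp p.1 p.2 := List.mem_map_of_mem hp
    exact PresApprox.and_bracket_of_mem ih hm (hΓ _ hm)
  · rw [List.mem_singleton.mp hY]
    exact hC

theorem PresApprox.and_bracket_of_atom_or_boxed (hC : C.isAtom ∨ C.isBoxed) :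
    PresApprox (seqImp Γ C) (.and (seqImp Γ C) (bracket (listConj Γ) C)) := by
  refine of_atom_or_boxed hC (ND_s10.deduction ND_s10.hyp₁) (.of_nd ?_)
  rcases hC with (⟨n, rfl⟩ | rfl) | ⟨B, rfl⟩ <;> exact ND_s10.head.andR

theorem PresApprox.and_bracket_or {C₁ C₂ : Form} (ih : ApproxBelow (seqWeight Γ (.or C₁ C₂))) :
    PresApprox (seqImp Γ (.or C₁ C₂))
      (.and (seqImp Γ (.or C₁ C₂)) (bracket (listConj Γ) (.or C₁ C₂))) := by
  have hlt : ∀ {C'}, wt C' < wt (.or C₁ C₂) → ∀ D₁ D₂, wt (.imp D₁ D₂) ≤ wt C' →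
      SeqApprox Γ (.imp D₁ D₂) := fun hC' D₁ D₂ hD => ih _ _ <| by
    have := four_pow_lt (lt_of_le_of_lt hD hC')
    simp only [seqWeight] at this ⊢
    omega
  exact ((imp_bracket _ C₁ (hlt (by simp only [wt]; have := one_le_wt C₂; omega))).or
    (imp_bracket _ C₂ (hlt (by simp only [wt]; have := one_le_wt C₁; omega)))).mono
    (ND_s10.head.orE (ND_s10.deduction ((ND_s10.hyp₁.mp ND_s10.head).orIL))
      (ND_s10.deduction ((ND_s10.hyp₁.mp ND_s10.head).orIR))) (.of_nd ND_s10.head.andR)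

theorem SeqApprox.of_forall_reduced (hΓ : ∀ G ∈ Γ, IsReducedImp G)
    (ih : ApproxBelow (seqWeight Γ C)) : SeqApprox Γ C := by
  have hwt : ∀ {Γ' C'}, (Γ'.map fun G => 4 ^ wt G).sum + 4 ^ wt C' < 4 ^ wt C →
      SeqApprox (Γ' ++ Γ) C' := fun h => ih _ _ <| by
    simp only [seqWeight, List.map_append, List.sum_append] at h ⊢
    omega
  cases C with
  | var n =>
    exact of_bracket_consequent hΓ ih (.and_bracket_of_atom_or_boxed (Or.inl (Or.inl ⟨n, rfl⟩)))
  | bot => exact of_bracket_consequent hΓ ih (.and_bracket_of_atom_or_boxed (Or.inl (Or.inr rfl)))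
  | box D => exact of_bracket_consequent hΓ ih (.and_bracket_of_atom_or_boxed (Or.inr ⟨D, rfl⟩))
  | or => exact of_bracket_consequent hΓ ih (.and_bracket_or ih)
  | and C₁ C₂ =>
    refine .and (hwt (Γ' := []) ?_) (hwt (Γ' := []) ?_)
    · simpa using four_pow_lt (r := wt (.and C₁ C₂)) (by simp only [wt]; omega)
    · simpa using four_pow_lt (r := wt (.and C₁ C₂)) (by simp only [wt]; omega)
  | imp C₁ C₂ =>
    refine .imp (hwt (Γ' := [C₁]) ?_)
    simpa using four_pow_add_lt (r := wt (.imp C₁ C₂))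
      (by simp only [wt]; have := one_le_wt C₂; omega)
      (by simp only [wt]; have := one_le_wt C₁; omega)

end Reduced

theorem SeqApprox.cons_of_not_reduced {Γ : List Form} {C G : Form} (hG : ¬ IsReducedImp G)
    (ih : ApproxBelow (seqWeight (G :: Γ) C)) : SeqApprox (G :: Γ) C := by
  have hwt : ∀ {Γ' : List Form}, (Γ'.map fun G => 4 ^ wt G).sum < 4 ^ wt G →
      SeqApprox (Γ' ++ Γ) C := fun h => ih _ _ <| by
    simp only [seqWeight, List.map_append, List.sum_append, List.map_cons, List.sum_cons] at h ⊢
    omega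
  match G, hG with
  | .var n, _ => exact cons_of_atom_or_boxed (Or.inl (Or.inl ⟨n, rfl⟩)) (hwt (Γ' := []) (by simp))
  | .bot, _ => exact cons_of_atom_or_boxed (Or.inl (Or.inr rfl)) (hwt (Γ' := []) (by simp))
  | .box D, _ => exact cons_of_atom_or_boxed (Or.inr ⟨D, rfl⟩) (hwt (Γ' := []) (by simp))
  | .and G₁ G₂, _ =>
    refine cons_and (hwt (Γ' := [G₁, G₂]) ?_)
    simpa using four_pow_add_lt (r := wt (.and G₁ G₂)) (by simp only [wt]; omega)
      (by simp only [wt]; omega)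
  | .or G₁ G₂, _ =>
    refine cons_or (hwt (Γ' := [G₁]) ?_) (hwt (Γ' := [G₂]) ?_)
    · simpa using four_pow_lt (r := wt (.or G₁ G₂)) (by simp only [wt]; omega)
    · simpa using four_pow_lt (r := wt (.or G₁ G₂)) (by simp only [wt]; omega)
  | .imp (.and E₁ E₂) F, _ =>
    refine cons_imp_and (hwt (Γ' := [.imp E₁ (.imp E₂ F)]) ?_)
    simpa using four_pow_lt (r := wt (.imp (.and E₁ E₂) F)) (by simp only [wt]; omega)
  | .imp (.or E₁ E₂) F, _ =>
    refine cons_imp_or (hwt (Γ' := [.imp E₁ F, .imp E₂ F]) ?_)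
    simpa using four_pow_add_lt (r := wt (.imp (.or E₁ E₂) F))
      (by simp only [wt]; have := one_le_wt E₂; omega)
      (by simp only [wt]; have := one_le_wt E₁; omega)
  | .imp (.var _) _, hG | .imp .bot _, hG | .imp (.box _) _, hG | .imp (.imp _ _) _, hG =>
    exact absurd trivial hG

theorem seqApprox (Γ : List Form) (C : Form) : SeqApprox Γ C := by
  have ih : ApproxBelow (seqWeight Γ C) := fun Γ' C' _ => seqApprox Γ' C'
  by_cases hΓ : ∀ G ∈ Γ, IsReducedImp G
  · exact .of_forall_reduced hΓ ih
  · obtain ⟨G, hG, hGr⟩ := not_forall₂.mp hΓ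
    have hperm := List.perm_cons_erase hG
    exact (SeqApprox.cons_of_not_reduced hGr (seqWeight_perm C hperm ▸ ih)).of_perm hperm
termination_by seqWeight Γ C

theorem pres_star {star : Form → Form} (hstar : IsNNILApproxOp star) (F : Form) :
    Pres F (star F) := by
  obtain ⟨H, hH, hHF, hFH⟩ := seqApprox [] F
  have hHF' : IPCbProves (.imp H F) :=
    ipcb_imp_iff_nd.2 ((ND_s10.of_ipcb hHF).mp ND_s10.head |>.mp ND_s10.imp_self)
  exact .a2 (.a2 (.of_nd (ND_s10.deduction ND_s10.hyp₁)) hFH) (.of_ipcb ((hstar F).2.2 H hH hHF'))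

/-- When `L` is the list of boxes stripped from a formula from index `k` on, `boxAt k L id` undoes
`strip`, and `boxAt k L (plusF star)` is the substitution `pᵢ ↦ □Bᵢ⁺` defining `A⁻` and `A⁺`. -/
def boxAt (k : ℕ) (L : List Form) (g : Form → Form) (n : ℕ) : Form :=
  if k ≤ n ∧ n < k + L.length then .box (g (L.getD (n - k) .bot)) else .var n

theorem substF_strip {f : ℕ → Form} : ∀ {A : Form} {k : ℕ}, A.fvb ≤ k →
    (∀ n < A.fvb, f n = .var n) →
    (∀ i (hi : i < (strip A k).2.length), f (k + i) = .box (strip A k).2[i]) →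
    substF f (strip A k).1 = A
  | .var n, _, _, hvar, _ => hvar n (by simp [fvb])
  | .bot, _, _, _, _ => rfl
  | .box _, _, _, _, hbox => by simpa [strip, substF] using hbox 0 (by simp [strip])
  | .and A B, k, hk, hvar, hbox | .or A B, k, hk, hvar, hbox | .imp A B, k, hk, hvar, hbox => by
    simp only [fvb, max_le_iff] at hk
    simp only [strip, substF]
    rw [substF_strip hk.1 (fun n hn => hvar n (by simp [fvb]; omega)) fun i hi => ?_,
      substF_strip (by omega) (fun n hn => hvar n (by simp [fvb]; omega)) fun i hi => ?_]
    · simpa [strip, List.getElem_append_right, add_assoc] using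
        hbox ((strip A k).2.length + i) (by simp [strip]; omega)
    · simpa [strip, List.getElem_append_left hi] using hbox i (by simp [strip]; omega)

theorem bdep_lt_of_mem_strip :
    ∀ {A : Form} {k : ℕ} {B : Form}, B ∈ (strip A k).2 → B.bdep < A.bdep
  | .box _, _, _, hB => by simp_all [strip, bdep]
  | .and A₁ A₂, _, _, hB | .or A₁ A₂, _, _, hB | .imp A₁ A₂, _, _, hB => by
    simp only [strip, List.mem_append] at hB
    simp only [bdep]
    rcases hB with hB | hB
    · exact lt_max_of_lt_left (bdep_lt_of_mem_strip hB)
    · exact lt_max_of_lt_right (bdep_lt_of_mem_strip hB)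

section boxAt

variable {k : ℕ} {L : List Form} {g g' : Form → Form}

theorem atomBoxedSubst_boxAt : AtomBoxedSubst (boxAt k L g) := fun n => by
  unfold boxAt
  split_ifs
  · exact Or.inr ⟨_, rfl⟩
  · exact Or.inl (Or.inl ⟨n, rfl⟩)

theorem getD_mem_of_boxAt {n : ℕ} (hn : k ≤ n ∧ n < k + L.length) :
    L.getD (n - k) .bot ∈ L := by
  rw [List.getD_eq_getElem _ _ (by omega)]
  exact List.getElem_mem _

theorem boxAt_congr (h : ∀ B ∈ L, g B = g' B) : boxAt k L g = boxAt k L g' := by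
  funext n
  unfold boxAt
  split_ifs with hn
  · rw [h _ (getD_mem_of_boxAt hn)]
  · rfl

theorem HsigmaProves.boxAt_congr (h : ∀ B ∈ L, HsigmaProves (iffF (.box (g B)) (.box (g' B))))
    (n : ℕ) : HsigmaProves (iffF (boxAt k L g n) (boxAt k L g' n)) := by
  unfold boxAt
  split_ifs with hn
  · exact h _ (getD_mem_of_boxAt hn)
  · exact iff_refl

theorem substF_boxAt_strip (A : Form) :
    substF (boxAt A.fvb (strip A A.fvb).2 id) (strip A A.fvb).1 = A :=
  substF_strip le_rfl (fun n hn => by simp [boxAt]; omega) fun i hi => by simp [boxAt, hi]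

end boxAt

theorem plusAux_succ (star : Form → Form) (fuel : ℕ) (A : Form) :
    plusAux star (fuel + 1) A =
      substF (boxAt A.fvb (strip A A.fvb).2 (plusAux star fuel)) (star (strip A A.fvb).1) :=
  rfl

theorem plusAux_eq_plusF (star : Form → Form) :
    ∀ {fuel : ℕ} {A : Form}, A.bdep < fuel → plusAux star fuel A = plusF star A
  | fuel + 1, A, h => by
    rw [plusF, plusAux_succ, plusAux_succ]
    refine congrArg (substF · _) (boxAt_congr fun B hB => ?_)
    have := bdep_lt_of_mem_strip hB
    rw [plusAux_eq_plusF star (by omega), plusAux_eq_plusF star (by omega)]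

theorem plusF_eq (star : Form → Form) (A : Form) :
    plusF star A =
      substF (boxAt A.fvb (strip A A.fvb).2 (plusF star)) (star (strip A A.fvb).1) := by
  rw [plusF, plusAux_succ]
  exact congrArg (substF · _)
    (boxAt_congr fun B hB => plusAux_eq_plusF star (bdep_lt_of_mem_strip hB))

theorem HsigmaProves.box_plusF_iff {star : Form → Form} (hstar : IsNNILApproxOp star)
    (A : Form) : HsigmaProves (iffF (.box (plusF star A)) (.box A)) := by
  set σ := boxAt A.fvb (strip A A.fvb).2 id
  set S := (strip A A.fvb).1
  have hplus : HsigmaProves (iffF (plusF star A) (substF σ (star S))) := by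
    rw [plusF_eq]
    exact substF_congr (boxAt_congr fun B hB => box_plusF_iff hstar B) _
  have hMA : IPCbProves (.imp (substF σ (star S)) (substF σ S)) := (hstar S).2.1.substF σ id
  have hAM : Pres (substF σ S) (substF σ (star S)) :=
    (pres_star hstar S).substF atomBoxedSubst_boxAt
  rw [substF_boxAt_strip] at hMA hAM
  have hbox := box_congr hplus
  have hAM' : HsigmaProves (.imp (.box A) (.box (substF σ (star S)))) :=
    .ax (Or.inr (Or.inr (Or.inr ⟨_, _, hAM, rfl⟩)))
  exact iff_intro (hbox.iff_mp.imp_trans (box_mono (Proves.of_ipcb hMA)))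
    (hAM'.imp_trans hbox.iff_mpr)
termination_by A.bdep
decreasing_by exact bdep_lt_of_mem_strip hB

/-- for every modal proposition A, H_σ ⊢ A⁻ ↔ A. -/
theorem Hsigma_minus_equiv (star : Form → Form) (hstar : IsNNILApproxOp star) (A : Form) :
    HsigmaProves (Form.iffF (minusF star A) A) := by
  have h := HsigmaProves.substF_congr (HsigmaProves.boxAt_congr (k := A.fvb)
    (L := (strip A A.fvb).2) (g' := id) fun B _ => .box_plusF_iff hstar B) (strip A A.fvb).1
  rwa [substF_boxAt_strip] at h

end PLHA
end
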